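/- arXiv:2101.05497 — 9 statements merged into one kernel-verified Lean document; each statement's English description precedes it below -/
import Mathlib

section
/- For every real number q with 0<q<1, every integer n≥1 and every λ∈ℂ with |λ|=1, there exist bounded operators Y_1,…,Y_{n+1} on the Hilbert space ℓ²(ℕⁿ) acting on the canonical orthonormal basis by the formulas of π_λ, and these operators form a Σ_q-family, i.e., they satisfy relations (R1)–(R5). -/
/-! `π_λ(Y_i)` for `i ≤ n` is a weighted backward shift `e_k ↦ w_i(k) e_{k - 𝐞_i}` and
`π_λ(Y_{n+1})` is diagonal. These operators and their adjoints are all weighted composition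
operators `f ↦ w · (f ∘ σ)` on `ℓ²(ℕⁿ)`, bounded since `|w| ≤ 1` and `σ` is injective where
`w ≠ 0`. Each relation then becomes a pointwise identity of weights. Shifting one coordinate
rescales the other weights by a power of `q`, which gives (R1)–(R2). `Y_i* Y_i` is diagonal with
symbol `q^{2 P_{i-1}} - q^{2 P_i}` for `i ≤ n` and `q^{2 P_n}` for `i = n + 1`, where `P_t` is the
degree of the first `t` coordinates (`k_n` counted twice); these telescope, giving (R3)–(R5). -/

open ContinuousLinearMap

noncomputable section

abbrev lpH (n : ℕ) : Type := lp (fun _ : Fin n → ℕ => ℂ) 2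

def basisE {n : ℕ} (k : Fin n → ℕ) : lpH n := lp.single 2 k 1

/-- A `Σ_q`-family: relations (R1)-(R5). Index `i : Fin (n+1)` corresponds to `Y_{i+1}`. -/
def IsSigmaQFamily (q : ℝ) {n : ℕ} {H : Type*} [NormedAddCommGroup H]
    [InnerProductSpace ℂ H] [CompleteSpace H]
    (Y : Fin (n + 1) → H →L[ℂ] H) : Prop :=
  (∀ i j : Fin (n + 1), j < i → ¬((i : ℕ) = n ∧ (j : ℕ) + 1 = n) →
      Y i * Y j = ((q : ℂ))⁻¹ • (Y j * Y i) ∧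
      adjoint (Y i) * Y j = ((q : ℂ))⁻¹ • (Y j * adjoint (Y i))) ∧
  (∀ j : Fin (n + 1), (j : ℕ) + 1 = n →
      Y (Fin.last n) * Y j = (((q : ℂ))⁻¹ ^ 2) • (Y j * Y (Fin.last n)) ∧
      adjoint (Y (Fin.last n)) * Y j = (((q : ℂ))⁻¹ ^ 2) • (Y j * adjoint (Y (Fin.last n)))) ∧
  (∀ i : Fin (n + 1), (i : ℕ) + 1 ≠ n →
      Y i * adjoint (Y i) - adjoint (Y i) * Y i
        = ((1 - q ^ 2 : ℝ) : ℂ) • ∑ k ∈ Finset.Ioi i, adjoint (Y k) * Y k) ∧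
  (∀ i : Fin (n + 1), (i : ℕ) + 1 = n →
      Y i * adjoint (Y i) - adjoint (Y i) * Y i
        = ((1 - q ^ 4 : ℝ) : ℂ) • (adjoint (Y (Fin.last n)) * Y (Fin.last n))) ∧
  (∑ i, adjoint (Y i) * Y i = 1)

/-- The representation `π_λ` on `ℓ²(ℕⁿ)`, described by its action on the canonical
orthonormal basis. Index `i : Fin n` (via `castSucc`) corresponds to `Y_{i+1}`,
and `Fin.last n` corresponds to `Y_{n+1}`. -/
def IsPiRep (q : ℝ) {n : ℕ} (lam : ℂ) (Y : Fin (n + 1) → lpH n →L[ℂ] lpH n) : Prop :=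
  (∀ i : Fin n, (i : ℕ) + 1 < n → ∀ k : Fin n → ℕ,
      Y i.castSucc (basisE k)
        = ((q ^ (∑ j ∈ Finset.Iio i, k j) * Real.sqrt (1 - q ^ (2 * k i)) : ℝ) : ℂ)
            • basisE (Function.update k i (k i - 1))) ∧
  (∀ i : Fin n, (i : ℕ) + 1 = n → ∀ k : Fin n → ℕ,
      Y i.castSucc (basisE k)
        = ((q ^ (∑ j ∈ Finset.Iio i, k j) * Real.sqrt (1 - q ^ (4 * k i)) : ℝ) : ℂ)
            • basisE (Function.update k i (k i - 1))) ∧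
  (∀ k : Fin n → ℕ,
      Y (Fin.last n) (basisE k)
        = (lam * (q : ℂ) ^ (∑ j : Fin n, if (j : ℕ) + 1 = n then 2 * k j else k j))
            • basisE k)

/-- Irreducibility: the only closed invariant subspaces are `⊥` and `⊤`. -/
def IsIrreducibleFamily {n : ℕ} {H : Type*} [NormedAddCommGroup H]
    [InnerProductSpace ℂ H] [CompleteSpace H]
    (Y : Fin (n + 1) → H →L[ℂ] H) : Prop :=
  ∀ V : Submodule ℂ H, IsClosed (V : Set H) →
    (∀ i : Fin (n + 1), ∀ v ∈ V, Y i v ∈ V ∧ adjoint (Y i) v ∈ V) →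
    V = ⊥ ∨ V = ⊤

open scoped lp NNReal ComplexConjugate

namespace lp

variable {ι : Type*}

theorem sum_norm_sq_le_norm_sq (f : ℓ²(ι, ℂ)) (s : Finset ι) :
    ∑ m ∈ s, ‖f m‖ ^ 2 ≤ ‖f‖ ^ 2 := by
  simpa using lp.sum_rpow_le_norm_rpow (p := 2) (by norm_num) f s

theorem sum_norm_weightedComp_sq_le (w : ι → ℂ) (σ : ι → ι) {C : ℝ≥0} (hw : ∀ m, ‖w m‖ ≤ C)
    (hσ : Set.InjOn σ (Function.support w)) (f : ℓ²(ι, ℂ)) (s : Finset ι) :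
    ∑ m ∈ s, ‖w m * f (σ m)‖ ^ 2 ≤ (C * ‖f‖) ^ 2 := by
  classical
  calc ∑ m ∈ s, ‖w m * f (σ m)‖ ^ 2 = ∑ m ∈ s.filter (w · ≠ 0), ‖w m * f (σ m)‖ ^ 2 := by
        refine (Finset.sum_filter_of_ne fun m _ hm => ?_).symm
        contrapose! hm
        simp [hm]
    _ ≤ ∑ m ∈ s.filter (w · ≠ 0), (C : ℝ) ^ 2 * ‖f (σ m)‖ ^ 2 := by
        gcongr with m
        rw [norm_mul, mul_pow]
        gcongr
        exact hw m
    _ = C ^ 2 * ∑ m ∈ (s.filter (w · ≠ 0)).image σ, ‖f m‖ ^ 2 := by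
        have hinj : Set.InjOn σ (s.filter (w · ≠ 0)) := fun x hx y hy =>
          hσ (Finset.mem_filter.1 hx).2 (Finset.mem_filter.1 hy).2
        rw [Finset.sum_image hinj, Finset.mul_sum]
    _ ≤ (C * ‖f‖) ^ 2 := by
        rw [mul_pow]
        gcongr
        exact sum_norm_sq_le_norm_sq f _

-- Injectivity is only needed off the zeros of `w`, which admits truncated shifts like `k - 𝐞_i`.
def weightedComp (w : ι → ℂ) (σ : ι → ι) {C : ℝ≥0} (hw : ∀ m, ‖w m‖ ≤ C)
    (hσ : Set.InjOn σ (Function.support w)) : ℓ²(ι, ℂ) →L[ℂ] ℓ²(ι, ℂ) :=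
  LinearMap.mkContinuous
    { toFun f := ⟨fun m => w m * f (σ m),
        memℓp_gen' (C := (C * ‖f‖) ^ 2) (by simpa using sum_norm_weightedComp_sq_le w σ hw hσ f)⟩
      map_add' f g := lp.ext <| funext fun m => mul_add _ _ _
      map_smul' c f := by ext m; simp [mul_left_comm] }
    C fun f => lp.norm_le_of_forall_sum_le (p := 2) (by norm_num) (by positivity) fun s => by
      simpa using sum_norm_weightedComp_sq_le w σ hw hσ f s

variable (w : ι → ℂ) (σ : ι → ι) {C : ℝ≥0} (hw : ∀ m, ‖w m‖ ≤ C)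
    (hσ : Set.InjOn σ (Function.support w))

@[simp]
theorem weightedComp_apply (f : ℓ²(ι, ℂ)) (m : ι) :
    weightedComp w σ hw hσ f m = w m * f (σ m) := rfl

theorem weightedComp_mul_weightedComp (v : ι → ℂ) (τ : ι → ι) {D : ℝ≥0} (hv : ∀ m, ‖v m‖ ≤ D)
    (hτ : Set.InjOn τ (Function.support v)) (c : ℂ) (hστ : ∀ m, τ (σ m) = σ (τ m))
    (h : ∀ m, w m * v (σ m) = c * (v m * w (τ m))) :
    weightedComp w σ hw hσ * weightedComp v τ hv hτ
      = c • (weightedComp v τ hv hτ * weightedComp w σ hw hσ) := by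
  ext f m
  simp only [mul_apply_eq_comp, smul_apply, lp.coeFn_smul,
    Pi.smul_apply, weightedComp_apply, smul_eq_mul, hστ]
  linear_combination f (σ (τ m)) * h m

-- `h` says that the two matrices in the basis `lp.single 2 k 1` are conjugate transposes.
theorem adjoint_weightedComp (v : ι → ℂ) (τ : ι → ι) {D : ℝ≥0} (hv : ∀ m, ‖v m‖ ≤ D)
    (hτ : Set.InjOn τ (Function.support v)) [DecidableEq ι]
    (h : ∀ k l, (if τ l = k then v l else 0) = if σ k = l then conj (w k) else 0) :
    adjoint (weightedComp w σ hw hσ) = weightedComp v τ hv hτ := by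
  refine lp.ext_continuousLinearMap (by norm_num) fun k => ?_
  ext l
  have hl : ∀ g : ℓ²(ι, ℂ), g l = inner ℂ (lp.single 2 l (1 : ℂ)) g := by
    intro g; simp [lp.inner_single_left]
  simp only [ContinuousLinearMap.comp_apply, lp.singleContinuousLinearMap_apply]
  rw [hl, ContinuousLinearMap.adjoint_inner_right, lp.inner_single_right]
  simp [lp.single_apply, Pi.single_apply, h, apply_ite conj]

end lp

namespace PiRep

open Finset
open scoped unitInterval

variable {n : ℕ}

-- `Y_n` carries `q⁴` where the other `Y_i` carry `q²`, and `Y_{n+1}` scales `e_k` by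
-- `q^{|k| + k_n}`.
def coordWeight (n : ℕ) (i : Fin n) : ℕ := if (i : ℕ) + 1 = n then 2 else 1

def partialDeg (t : ℕ) (k : Fin n → ℕ) : ℕ :=
  ∑ j : Fin n, if (j : ℕ) < t then coordWeight n j * k j else 0

def shiftWeight (q : ℝ) (i : Fin n) (k : Fin n → ℕ) : ℝ :=
  q ^ (∑ j ∈ Iio i, k j) * √(1 - q ^ (2 * coordWeight n i * k i))

theorem coordWeight_of_lt {i j : Fin n} (h : j < i) : coordWeight n j = 1 :=
  if_neg (by have := i.isLt; rw [Fin.lt_def] at h; omega)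

theorem partialDeg_zero (k : Fin n → ℕ) : partialDeg 0 k = 0 := by
  simp [partialDeg]

theorem partialDeg_val_eq_sum_Iio (i : Fin n) (k : Fin n → ℕ) :
    partialDeg i k = ∑ j ∈ Iio i, k j := by
  rw [partialDeg, ← sum_filter]
  refine sum_congr (by ext j; simp only [mem_filter, mem_univ, true_and, mem_Iio, Fin.lt_def])
    fun j hj => ?_
  rw [coordWeight_of_lt (mem_Iio.1 hj), one_mul]

theorem partialDeg_succ (i : Fin n) (k : Fin n → ℕ) :
    partialDeg (i + 1) k = partialDeg i k + coordWeight n i * k i := by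
  have h (j : Fin n) : (if (j : ℕ) < i + 1 then coordWeight n j * k j else 0)
      = (if (j : ℕ) < i then coordWeight n j * k j else 0)
        + if j = i then coordWeight n j * k j else 0 := by
    by_cases hji : j = i
    · simp [hji]
    · have := Fin.val_ne_of_ne hji
      rw [if_neg hji, add_zero]
      split_ifs <;> first | rfl | omega
  simp_rw [partialDeg, h, sum_add_distrib, sum_ite_eq', mem_univ, if_true]

theorem partialDeg_add_single (t : ℕ) (i : Fin n) (k : Fin n → ℕ) :
    partialDeg t (k + Pi.single i 1)
      = partialDeg t k + if (i : ℕ) < t then coordWeight n i else 0 := by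
  have h (j : Fin n) :
      (if (j : ℕ) < t then coordWeight n j * (k + Pi.single i 1 : Fin n → ℕ) j else 0)
      = (if (j : ℕ) < t then coordWeight n j * k j else 0)
        + if j = i then (if (i : ℕ) < t then coordWeight n i else 0) else 0 := by
    by_cases hji : j = i
    · subst hji; by_cases ht : (j : ℕ) < t <;> simp [ht, mul_add]
    · simp [hji]
  simp_rw [partialDeg, h, sum_add_distrib, sum_ite_eq', mem_univ, if_true]

theorem partialDeg_self_eq_sum (k : Fin n → ℕ) :
    partialDeg n k = ∑ j : Fin n, if (j : ℕ) + 1 = n then 2 * k j else k j :=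
  sum_congr rfl fun j _ => by rw [if_pos j.isLt, coordWeight]; split_ifs <;> ring

theorem update_eq_sub_single (k : Fin n → ℕ) (i : Fin n) :
    Function.update k i (k i - 1) = k - Pi.single i 1 := by
  ext j
  by_cases hji : j = i
  · subst hji; simp
  · simp [hji]

theorem sub_single_add_single {i : Fin n} {k : Fin n → ℕ} (h : k i ≠ 0) :
    k - Pi.single i 1 + Pi.single i 1 = k := by
  ext j
  by_cases hji : j = i
  · subst hji; simp; omega
  · simp [hji]

theorem sub_single_add_single_comm {i j : Fin n} (h : i ≠ j) (k : Fin n → ℕ) :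
    k - Pi.single i 1 + Pi.single j 1 = k + Pi.single j 1 - Pi.single i 1 := by
  ext l
  by_cases hli : l = i
  · subst hli; simp [h]
  · by_cases hlj : l = j
    · subst hlj; simp [hli]
    · simp [hli, hlj]

-- For `|q| > 1` the radicand is `≤ 0`, so `Real.sqrt` makes the weight vanish.
theorem abs_shiftWeight_le_one (q : ℝ) (i : Fin n) (k : Fin n → ℕ) :
    |shiftWeight q i k| ≤ 1 := by
  have hpow : q ^ (2 * coordWeight n i * k i) = (q ^ 2) ^ (coordWeight n i * k i) := by
    rw [← pow_mul, mul_assoc]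
  rw [shiftWeight, abs_mul, abs_pow, abs_of_nonneg (Real.sqrt_nonneg _)]
  by_cases hq : |q| ≤ 1
  · exact mul_le_one₀ (pow_le_one₀ (abs_nonneg q) hq) (Real.sqrt_nonneg _)
      (Real.sqrt_le_one.2 (by
        rw [hpow]; linarith [pow_nonneg (sq_nonneg q) (coordWeight n i * k i)]))
  · have : 1 ≤ q ^ 2 := by nlinarith [abs_mul_abs_self q, sq_abs q]
    rw [Real.sqrt_eq_zero'.2 (by
        rw [hpow]; linarith [one_le_pow₀ (n := coordWeight n i * k i) this]),
      mul_zero]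
    exact zero_le_one

theorem shiftWeight_of_eq_zero (q : ℝ) {i : Fin n} {k : Fin n → ℕ} (h : k i = 0) :
    shiftWeight q i k = 0 := by
  simp [shiftWeight, h]

theorem shiftWeight_congr (q : ℝ) {i : Fin n} {k k' : Fin n → ℕ} (h : ∀ j ≤ i, k j = k' j) :
    shiftWeight q i k = shiftWeight q i k' := by
  rw [shiftWeight, shiftWeight, h i le_rfl, sum_congr rfl fun j hj => h j (mem_Iio.1 hj).le]

theorem shiftWeight_add_single_of_gt (q : ℝ) {i j : Fin n} (h : j < i) (k : Fin n → ℕ) :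
    shiftWeight q j (k + Pi.single i 1) = shiftWeight q j k :=
  shiftWeight_congr q fun l hl => by simp [(hl.trans_lt h).ne]

theorem shiftWeight_sub_single_of_gt (q : ℝ) {i j : Fin n} (h : j < i) (k : Fin n → ℕ) :
    shiftWeight q j (k - Pi.single i 1) = shiftWeight q j k :=
  shiftWeight_congr q fun l hl => by simp [(hl.trans_lt h).ne]

theorem shiftWeight_add_single_of_lt (q : ℝ) {i j : Fin n} (h : j < i) (k : Fin n → ℕ) :
    shiftWeight q i (k + Pi.single j 1) = q * shiftWeight q i k := by
  have hsum : ∑ l ∈ Iio i, (k + Pi.single j 1 : Fin n → ℕ) l = ∑ l ∈ Iio i, k l + 1 := by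
    simp [sum_add_distrib, Pi.single_apply, h]
  rw [shiftWeight, shiftWeight, hsum, Pi.add_apply, Pi.single_eq_of_ne h.ne', add_zero, pow_succ]
  ring

theorem sq_shiftWeight {q : ℝ} (hq0 : 0 ≤ q) (hq1 : q ≤ 1) (i : Fin n) (k : Fin n → ℕ) :
    shiftWeight q i k ^ 2 = q ^ (2 * partialDeg i k) - q ^ (2 * partialDeg (i + 1) k) := by
  rw [shiftWeight, mul_pow, Real.sq_sqrt (sub_nonneg.2 (pow_le_one₀ hq0 hq1)), partialDeg_succ,
    partialDeg_val_eq_sum_Iio]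
  ring

theorem sq_shiftWeight_add_single_sub_sq {q : ℝ} (hq0 : 0 ≤ q) (hq1 : q ≤ 1) (i : Fin n)
    (k : Fin n → ℕ) :
    shiftWeight q i (k + Pi.single i 1) ^ 2 - shiftWeight q i k ^ 2
      = (1 - q ^ (2 * coordWeight n i)) * q ^ (2 * partialDeg (i + 1) k) := by
  rw [sq_shiftWeight hq0 hq1, sq_shiftWeight hq0 hq1, partialDeg_add_single, partialDeg_add_single,
    if_neg (lt_irrefl _), if_pos (Nat.lt_succ_self _)]
  ring

def shiftOp (q : ℝ) (i : Fin n) : ℓ²(Fin n → ℕ, ℂ) →L[ℂ] ℓ²(Fin n → ℕ, ℂ) :=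
  lp.weightedComp (fun k => (shiftWeight q i (k + Pi.single i 1) : ℂ)) (· + Pi.single i 1)
    (C := 1) (fun k => by simpa using abs_shiftWeight_le_one q i _) (add_left_injective _).injOn

def shiftOpAdj (q : ℝ) (i : Fin n) : ℓ²(Fin n → ℕ, ℂ) →L[ℂ] ℓ²(Fin n → ℕ, ℂ) :=
  lp.weightedComp (fun k => (shiftWeight q i k : ℂ)) (· - Pi.single i 1)
    (C := 1) (fun k => by simpa using abs_shiftWeight_le_one q i _) fun k hk k' hk' h => by
      have hk : k i ≠ 0 := fun h0 => hk (by simp [shiftWeight_of_eq_zero q h0])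
      have hk' : k' i ≠ 0 := fun h0 => hk' (by simp [shiftWeight_of_eq_zero q h0])
      rw [← sub_single_add_single hk, ← sub_single_add_single hk']
      exact congrArg (· + Pi.single i 1) h

def diagOp (q : I) (μ : ℂ) : ℓ²(Fin n → ℕ, ℂ) →L[ℂ] ℓ²(Fin n → ℕ, ℂ) :=
  lp.weightedComp (fun k => μ * (q : ℂ) ^ partialDeg n k) id (C := ‖μ‖₊)
    (fun k => by
      simpa [abs_of_nonneg (unitInterval.nonneg q)] using
        mul_le_of_le_one_right (norm_nonneg μ) (pow_le_one₀ (n := partialDeg n k)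
          (unitInterval.nonneg q) (unitInterval.le_one q)))
    Function.injective_id.injOn

@[simp]
theorem shiftOp_apply (q : ℝ) (i : Fin n) (f : ℓ²(Fin n → ℕ, ℂ)) (k : Fin n → ℕ) :
    shiftOp q i f k = shiftWeight q i (k + Pi.single i 1) * f (k + Pi.single i 1) := rfl

@[simp]
theorem shiftOpAdj_apply (q : ℝ) (i : Fin n) (f : ℓ²(Fin n → ℕ, ℂ)) (k : Fin n → ℕ) :
    shiftOpAdj q i f k = shiftWeight q i k * f (k - Pi.single i 1) := rfl

@[simp]
theorem diagOp_apply (q : I) (μ : ℂ) (f : ℓ²(Fin n → ℕ, ℂ)) (k : Fin n → ℕ) :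
    diagOp q μ f k = μ * (q : ℂ) ^ partialDeg n k * f k := rfl

theorem shiftOp_basisE (q : ℝ) (i : Fin n) (k : Fin n → ℕ) :
    shiftOp q i (basisE k) = (shiftWeight q i k : ℂ) • basisE (k - Pi.single i 1) := by
  ext m
  simp only [shiftOp_apply, basisE, lp.coeFn_smul, Pi.smul_apply, lp.single_apply,
    Pi.single_apply, smul_eq_mul, mul_ite, mul_one, mul_zero]
  by_cases h : m + Pi.single i 1 = k
  · subst h; simp
  · rw [if_neg h]
    split_ifs with hm
    · have hk : k i = 0 := by
        by_contra hk
        exact h (by rw [hm, sub_single_add_single hk])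
      simp [shiftWeight_of_eq_zero q hk]
    · rfl

theorem diagOp_basisE (q : I) (μ : ℂ) (k : Fin n → ℕ) :
    diagOp q μ (basisE k) = (μ * (q : ℂ) ^ partialDeg n k) • basisE k := by
  ext m : 2
  by_cases h : m = k
  · subst h; simp [basisE]
  · simp [basisE, lp.single_apply, h]

theorem adjoint_shiftOp (q : ℝ) (i : Fin n) :
    adjoint (shiftOp q i) = shiftOpAdj q i := by
  classical
  refine lp.adjoint_weightedComp _ _ _ _ _ _ _ _ fun k l => ?_
  by_cases h : k + Pi.single i 1 = l
  · subst h; simp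
  · rw [if_neg h, ite_eq_right_iff]
    intro hl
    have hli : l i = 0 := by
      by_contra hli
      exact h (by rw [← hl, sub_single_add_single hli])
    simp [shiftWeight_of_eq_zero q hli]

theorem adjoint_diagOp (q : I) (μ : ℂ) :
    adjoint (diagOp (n := n) q μ) = diagOp q (conj μ) := by
  classical
  refine lp.adjoint_weightedComp _ _ _ _ _ _ _ _ fun k l => ?_
  by_cases h : k = l
  · subst h; simp
  · simp [h, Ne.symm h]

theorem shiftOp_mul_shiftOp {q : ℝ} (hq : q ≠ 0) {i j : Fin n} (h : j < i) :
    shiftOp q i * shiftOp q j = (q : ℂ)⁻¹ • (shiftOp q j * shiftOp q i) := by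
  refine lp.weightedComp_mul_weightedComp _ _ _ _ _ _ _ _ _ (fun k => add_right_comm _ _ _)
    fun k => ?_
  have hj := shiftWeight_add_single_of_gt q h (k + Pi.single j 1)
  rw [add_right_comm k (Pi.single j 1)] at hj
  rw [hj, add_right_comm k (Pi.single j 1), shiftWeight_add_single_of_lt q h]
  have hq' : (q : ℂ) ≠ 0 := by exact_mod_cast hq
  push_cast
  field_simp

theorem shiftOpAdj_mul_shiftOp {q : ℝ} (hq : q ≠ 0) {i j : Fin n} (h : j < i) :
    shiftOpAdj q i * shiftOp q j = (q : ℂ)⁻¹ • (shiftOp q j * shiftOpAdj q i) := by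
  refine lp.weightedComp_mul_weightedComp _ _ _ _ _ _ _ _ _
    (fun k => sub_single_add_single_comm h.ne' k) fun k => ?_
  rw [sub_single_add_single_comm h.ne', shiftWeight_sub_single_of_gt q h,
    shiftWeight_add_single_of_lt q h]
  have hq' : (q : ℂ) ≠ 0 := by exact_mod_cast hq
  push_cast
  field_simp

theorem diagOp_mul_shiftOp {q : I} (hq : (q : ℝ) ≠ 0) (μ : ℂ) (j : Fin n) :
    diagOp q μ * shiftOp q j
      = ((q : ℂ)⁻¹) ^ coordWeight n j • (shiftOp q j * diagOp q μ) := by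
  refine lp.weightedComp_mul_weightedComp _ _ _ _ _ _ _ _ _ (fun k => rfl) fun k => ?_
  rw [partialDeg_add_single, if_pos j.isLt, pow_add]
  have hq' : (q : ℂ) ≠ 0 := by exact_mod_cast hq
  simp only [id, inv_pow]
  field_simp

theorem shiftOp_shiftOpAdj_apply (q : ℝ) (i : Fin n) (f : ℓ²(Fin n → ℕ, ℂ))
    (k : Fin n → ℕ) :
    shiftOp q i (shiftOpAdj q i f) k = (shiftWeight q i (k + Pi.single i 1) ^ 2 : ℝ) * f k := by
  simp [sq, mul_assoc]

theorem shiftOpAdj_shiftOp_apply (q : ℝ) (i : Fin n) (f : ℓ²(Fin n → ℕ, ℂ))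
    (k : Fin n → ℕ) :
    shiftOpAdj q i (shiftOp q i f) k = (shiftWeight q i k ^ 2 : ℝ) * f k := by
  simp only [shiftOpAdj_apply, shiftOp_apply]
  by_cases hk : k i = 0
  · simp [shiftWeight_of_eq_zero q hk]
  · rw [sub_single_add_single hk]
    push_cast
    ring

theorem diagOp_diagOp_apply (q : I) (μ ν : ℂ) (f : ℓ²(Fin n → ℕ, ℂ)) (k : Fin n → ℕ) :
    diagOp q μ (diagOp q ν f) k = μ * ν * (q : ℂ) ^ (2 * partialDeg n k) * f k := by
  simp only [diagOp_apply]
  ring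

def piY (q : I) (lam : ℂ) : Fin (n + 1) → ℓ²(Fin n → ℕ, ℂ) →L[ℂ] ℓ²(Fin n → ℕ, ℂ) :=
  Fin.lastCases (diagOp q lam) (shiftOp q)

@[simp]
theorem piY_castSucc (q : I) (lam : ℂ) (i : Fin n) : piY q lam i.castSucc = shiftOp q i :=
  Fin.lastCases_castSucc i

@[simp]
theorem piY_last (q : I) (lam : ℂ) : piY q lam (Fin.last n) = diagOp q lam :=
  Fin.lastCases_last

-- The diagonal symbol of `Y_{t+1}* Y_{t+1}`; `t = n` stands for `Y_{n+1}`.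
def normSqWeight (q : ℝ) (t : ℕ) (k : Fin n → ℕ) : ℝ :=
  if t < n then q ^ (2 * partialDeg t k) - q ^ (2 * partialDeg (t + 1) k)
  else q ^ (2 * partialDeg t k)

theorem sum_Ico_normSqWeight (q : ℝ) {a : ℕ} (ha : a ≤ n) (k : Fin n → ℕ) :
    ∑ t ∈ Ico a (n + 1), normSqWeight q t k = q ^ (2 * partialDeg a k) := by
  have hlt : ∀ t ∈ Ico a n,
      normSqWeight q t k = -(q ^ (2 * partialDeg (t + 1) k) - q ^ (2 * partialDeg t k)) :=
    fun t ht => by rw [normSqWeight, if_pos (mem_Ico.1 ht).2, neg_sub]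
  rw [sum_Ico_succ_top ha, normSqWeight, if_neg (lt_irrefl n), sum_congr rfl hlt, sum_neg_distrib,
    sum_Ico_sub (fun t => q ^ (2 * partialDeg t k)) ha]
  ring

theorem sum_normSqWeight (q : ℝ) (k : Fin n → ℕ) :
    ∑ j : Fin (n + 1), normSqWeight q j k = 1 := by
  rw [Fin.sum_univ_eq_sum_range (fun t => normSqWeight q t k), range_eq_Ico,
    sum_Ico_normSqWeight q (Nat.zero_le n), partialDeg_zero, mul_zero, pow_zero]

theorem sum_Ioi_normSqWeight (q : ℝ) (i : Fin n) (k : Fin n → ℕ) :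
    ∑ j ∈ Ioi i.castSucc, normSqWeight q j k = q ^ (2 * partialDeg (i + 1) k) := by
  have := sum_map (Ioi i.castSucc) Fin.valEmbedding (fun t => normSqWeight q t k)
  rw [Fin.valEmbedding_apply] at this
  rw [← this, Fin.map_valEmbedding_Ioi, Fin.val_castSucc, ← Ico_add_one_left_eq_Ioo,
    sum_Ico_normSqWeight q (a := i + 1) i.isLt]

theorem adjoint_piY_piY_apply (q : I) {lam : ℂ} (hlam : ‖lam‖ = 1) (j : Fin (n + 1))
    (f : ℓ²(Fin n → ℕ, ℂ)) (k : Fin n → ℕ) :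
    adjoint (piY q lam j) (piY q lam j f) k = normSqWeight q j k * f k := by
  induction j using Fin.lastCases with
  | last =>
    rw [piY_last, adjoint_diagOp, diagOp_diagOp_apply, Complex.conj_mul', hlam, normSqWeight,
      Fin.val_last, if_neg (lt_irrefl n)]
    push_cast
    ring
  | cast i =>
    rw [piY_castSucc, adjoint_shiftOp, shiftOpAdj_shiftOp_apply,
      sq_shiftWeight (unitInterval.nonneg q) (unitInterval.le_one q), normSqWeight,
      Fin.val_castSucc, if_pos i.isLt]

theorem piY_mul_piY_of_lt {q : I} (hq : (q : ℝ) ≠ 0) (lam : ℂ) {i j : Fin (n + 1)} (hji : j < i)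
    (hij : ¬((i : ℕ) = n ∧ (j : ℕ) + 1 = n)) :
    piY q lam i * piY q lam j = (q : ℂ)⁻¹ • (piY q lam j * piY q lam i) ∧
      adjoint (piY q lam i) * piY q lam j = (q : ℂ)⁻¹ • (piY q lam j * adjoint (piY q lam i)) := by
  induction j using Fin.lastCases with
  | last => exact absurd hji (not_lt.2 (Fin.le_last i))
  | cast j =>
    induction i using Fin.lastCases with
    | last =>
      have hc : coordWeight n j = 1 := if_neg fun h => hij ⟨Fin.val_last n, h⟩
      simp only [piY_last, piY_castSucc, adjoint_diagOp]
      exact ⟨by simpa [hc] using diagOp_mul_shiftOp hq lam j,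
        by simpa [hc] using diagOp_mul_shiftOp hq (conj lam) j⟩
    | cast i =>
      rw [Fin.castSucc_lt_castSucc_iff] at hji
      simp only [piY_castSucc, adjoint_shiftOp]
      exact ⟨shiftOp_mul_shiftOp hq hji, shiftOpAdj_mul_shiftOp hq hji⟩

theorem piY_last_mul_piY_of_succ_eq {q : I} (hq : (q : ℝ) ≠ 0) (lam : ℂ) {j : Fin (n + 1)}
    (hj : (j : ℕ) + 1 = n) :
    piY q lam (Fin.last n) * piY q lam j
        = ((q : ℂ)⁻¹ ^ 2) • (piY q lam j * piY q lam (Fin.last n)) ∧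
      adjoint (piY q lam (Fin.last n)) * piY q lam j
        = ((q : ℂ)⁻¹ ^ 2) • (piY q lam j * adjoint (piY q lam (Fin.last n))) := by
  obtain ⟨j, rfl⟩ := (Fin.exists_castSucc_eq (i := j)).2 (by rintro rfl; simp at hj)
  have hc : coordWeight n j = 2 := if_pos hj
  simp only [piY_last, piY_castSucc, adjoint_diagOp]
  exact ⟨by simpa [hc] using diagOp_mul_shiftOp hq lam j,
    by simpa [hc] using diagOp_mul_shiftOp hq (conj lam) j⟩

theorem piY_commutator_of_succ_ne (q : I) {lam : ℂ} (hlam : ‖lam‖ = 1) {i : Fin (n + 1)}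
    (hi : (i : ℕ) + 1 ≠ n) :
    piY q lam i * adjoint (piY q lam i) - adjoint (piY q lam i) * piY q lam i
      = ((1 - (q : ℝ) ^ 2 : ℝ) : ℂ) • ∑ j ∈ Ioi i, adjoint (piY q lam j) * piY q lam j := by
  induction i using Fin.lastCases with
  | last =>
    rw [Ioi_eq_empty.2 fun j _ => Fin.le_last j, sum_empty, smul_zero, sub_eq_zero, piY_last,
      adjoint_diagOp]
    ext f k
    simp only [mul_apply_eq_comp, diagOp_diagOp_apply]
    ring
  | cast i =>
    have hc : coordWeight n i = 1 := if_neg hi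
    ext f k
    simp only [sub_apply, mul_apply_eq_comp, smul_apply, _root_.sum_apply, lp.coeFn_sub,
      lp.coeFn_smul, lp.coeFn_sum, Pi.sub_apply, Pi.smul_apply, Finset.sum_apply,
      adjoint_piY_piY_apply q hlam, piY_castSucc, adjoint_shiftOp, shiftOp_shiftOpAdj_apply,
      shiftOpAdj_shiftOp_apply]
    rw [← sum_mul, ← Complex.ofReal_sum, sum_Ioi_normSqWeight, ← sub_mul, ← Complex.ofReal_sub,
      sq_shiftWeight_add_single_sub_sq (unitInterval.nonneg q) (unitInterval.le_one q), hc]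
    simp [mul_assoc]

theorem piY_commutator_of_succ_eq (q : I) {lam : ℂ} (hlam : ‖lam‖ = 1) {i : Fin (n + 1)}
    (hi : (i : ℕ) + 1 = n) :
    piY q lam i * adjoint (piY q lam i) - adjoint (piY q lam i) * piY q lam i
      = ((1 - (q : ℝ) ^ 4 : ℝ) : ℂ)
          • (adjoint (piY q lam (Fin.last n)) * piY q lam (Fin.last n)) := by
  obtain ⟨i, rfl⟩ := (Fin.exists_castSucc_eq (i := i)).2 (by rintro rfl; simp at hi)
  rw [Fin.val_castSucc] at hi
  have hc : coordWeight n i = 2 := if_pos hi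
  ext f k
  simp only [sub_apply, mul_apply_eq_comp, smul_apply, lp.coeFn_sub, lp.coeFn_smul, Pi.sub_apply,
    Pi.smul_apply, adjoint_piY_piY_apply q hlam, piY_castSucc, adjoint_shiftOp,
    shiftOp_shiftOpAdj_apply, shiftOpAdj_shiftOp_apply]
  rw [← sub_mul, ← Complex.ofReal_sub,
    sq_shiftWeight_add_single_sub_sq (unitInterval.nonneg q) (unitInterval.le_one q), hc,
    normSqWeight, Fin.val_last, if_neg (lt_irrefl n), hi]
  simp [mul_assoc]

theorem sum_adjoint_piY_mul_piY (q : I) {lam : ℂ} (hlam : ‖lam‖ = 1) :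
    ∑ i, adjoint (piY (n := n) q lam i) * piY q lam i = 1 := by
  ext f k
  simp only [_root_.sum_apply, mul_apply_eq_comp, lp.coeFn_sum, Finset.sum_apply,
    adjoint_piY_piY_apply q hlam, one_apply_eq_self]
  rw [← sum_mul, ← Complex.ofReal_sum, sum_normSqWeight, Complex.ofReal_one, one_mul]

theorem isPiRep_piY (q : I) (lam : ℂ) : IsPiRep q lam (piY (n := n) q lam) := by
  refine ⟨fun i hi k => ?_, fun i hi k => ?_, fun k => ?_⟩
  · rw [piY_castSucc, shiftOp_basisE, shiftWeight, coordWeight, if_neg hi.ne, mul_one,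
      update_eq_sub_single]
  · rw [piY_castSucc, shiftOp_basisE, shiftWeight, coordWeight, if_pos hi, update_eq_sub_single]
  · rw [piY_last, diagOp_basisE, partialDeg_self_eq_sum]

theorem isSigmaQFamily_piY {q : I} (hq : (q : ℝ) ≠ 0) {lam : ℂ} (hlam : ‖lam‖ = 1) :
    IsSigmaQFamily q (piY (n := n) q lam) :=
  ⟨fun _ _ => piY_mul_piY_of_lt hq lam, fun _ => piY_last_mul_piY_of_succ_eq hq lam,
    fun _ => piY_commutator_of_succ_ne q hlam, fun _ => piY_commutator_of_succ_eq q hlam,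
    sum_adjoint_piY_mul_piY q hlam⟩

end PiRep

theorem exists_piRep_general (q : ℝ) (hq0 : 0 < q) (hq1 : q < 1) (n : ℕ)
    (lam : ℂ) (hlam : ‖lam‖ = 1) :
    ∃ Y : Fin (n + 1) → lpH n →L[ℂ] lpH n, IsPiRep q lam Y ∧ IsSigmaQFamily q Y :=
  ⟨PiRep.piY ⟨q, hq0.le, hq1.le⟩ lam, PiRep.isPiRep_piY _ lam,
    PiRep.isSigmaQFamily_piY hq0.ne' hlam⟩

/-- Proposition 2 of the paper: for every `0 < q < 1`, `n ≥ 1` and `λ ∈ U(1)` there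
exist bounded operators on `ℓ²(ℕⁿ)` acting on the canonical basis by the formulas
of `π_λ`, and they form a `Σ_q`-family. -/
theorem exists_piRep (q : ℝ) (hq0 : 0 < q) (hq1 : q < 1) (n : ℕ) (hn : 1 ≤ n)
    (lam : ℂ) (hlam : ‖lam‖ = 1) :
    ∃ Y : Fin (n + 1) → lpH n →L[ℂ] lpH n, IsPiRep q lam Y ∧ IsSigmaQFamily q Y :=
  exists_piRep_general q hq0 hq1 n lam hlam
end
end

section
/- For every real number q with 0<q<1, every integer n≥1 and every λ∈ℂ with |λ|=1, the Σ_q-family π_λ on ℓ²(ℕⁿ) is irreducible: the only closed subspaces of ℓ²(ℕⁿ) invariant under all the operators π_λ(Y_i) and their adjoints π_λ(Y_i)* (1≤i≤n+1) are {0} and ℓ²(ℕⁿ). -/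
open ContinuousLinearMap

noncomputable section

/-! The lowering operators `Y_1, …, Y_n` all kill `e_0`, and since their weights on the other
basis vectors are nonzero, `e_0` spans their common kernel. If a closed subspace `V` is invariant
under every `Y_i` and `Y_i*`, the orthogonal projection `P` onto `V` commutes with the `Y_i`, so
`P e_0` lies in that kernel: `P e_0 = c • e_0`. Hence `e_0 ∈ V` (if `c ≠ 0`) or `e_0 ∈ Vᗮ`
(if `c = 0`). The raising operators `Y_i*` have nonzero weights as well, so they generate every
`e_k` from `e_0` inside that same invariant subspace, which is therefore everything. -/

section StarProjection

variable {𝕜 E : Type*} [RCLike 𝕜] [NormedAddCommGroup E] [InnerProductSpace 𝕜 E]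
  [CompleteSpace E]

theorem Submodule.commute_starProjection_of_invariant {V : Submodule 𝕜 E}
    [V.HasOrthogonalProjection] {T : E →L[𝕜] E} (hT : ∀ v ∈ V, T v ∈ V)
    (hT' : ∀ v ∈ V, adjoint T v ∈ V) : Commute V.starProjection T := by
  ext x
  show V.starProjection (T x) = T (V.starProjection x)
  refine V.eq_starProjection_of_mem_orthogonal (hT _ (V.starProjection_apply_mem x)) ?_
  rw [← map_sub]
  exact orthogonal_mem_invtSubmodule (T := T) hT' (V.sub_starProjection_mem_orthogonal x)

end StarProjection

namespace lp

variable {ι 𝕜 : Type*} [RCLike 𝕜] [DecidableEq ι]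

theorem inner_single_one_left (k : ι) (f : lp (fun _ : ι => 𝕜) 2) :
    inner 𝕜 (lp.single 2 k (1 : 𝕜)) f = f k := by
  simp [lp.inner_single_left]

/-- `T` is a weighted shift `e_m ↦ c m • e_(σ m)`, and `ρ` inverts `σ` on the support of `c`. -/
theorem adjoint_single_eq_of_apply_single
    {T : lp (fun _ : ι => 𝕜) 2 →L[𝕜] lp (fun _ : ι => 𝕜) 2} {c : ι → 𝕜} {σ ρ : ι → ι}
    (hT : ∀ m, T (lp.single 2 m 1) = c m • lp.single 2 (σ m) 1)
    (hσρ : ∀ k m, c m ≠ 0 → (σ m = k ↔ m = ρ k)) (k : ι) :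
    adjoint T (lp.single 2 k 1) = starRingEnd 𝕜 (c (ρ k)) • lp.single 2 (ρ k) 1 := by
  ext m
  rw [← inner_single_one_left, adjoint_inner_right, ← inner_conj_symm, inner_single_one_left, hT]
  simp only [lp.coeFn_smul, Pi.smul_apply, lp.single_apply, smul_eq_mul, map_mul]
  by_cases hc : c m = 0
  · by_cases hm : m = ρ k
    · subst hm; simp [hc]
    · simp [hc, hm]
  · by_cases hm : m = ρ k
    · have hσ := (hσρ k m hc).mpr hm
      subst hm; simp [hσ]
    · simp [hm, mt (hσρ k m hc).mp hm]

theorem apply_eq_of_adjoint_single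
    {T : lp (fun _ : ι => 𝕜) 2 →L[𝕜] lp (fun _ : ι => 𝕜) 2} {d : ι → 𝕜} {τ : ι → ι}
    (hT : ∀ k, adjoint T (lp.single 2 k 1) = d k • lp.single 2 (τ k) 1)
    (v : lp (fun _ : ι => 𝕜) 2) (k : ι) : T v k = starRingEnd 𝕜 (d k) * v (τ k) := by
  rw [← inner_single_one_left, ← adjoint_inner_left, hT, inner_smul_left, inner_single_one_left]

theorem orthogonal_eq_bot_of_forall_single_mem {W : Submodule 𝕜 (lp (fun _ : ι => 𝕜) 2)}
    (hW : ∀ k, lp.single 2 k 1 ∈ W) : Wᗮ = ⊥ := by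
  refine (Submodule.eq_bot_iff _).mpr fun x hx => lp.ext (funext fun k => ?_)
  rw [← inner_single_one_left, Submodule.inner_right_of_mem_orthogonal (hW k) hx]
  rfl

end lp

theorem Pi.exists_eq_add_single_of_ne_zero {ι : Type*} [DecidableEq ι] {k : ι → ℕ} (hk : k ≠ 0) :
    ∃ i, k i ≠ 0 ∧ k = (k - Pi.single i 1) + Pi.single i 1 := by
  obtain ⟨i, hi⟩ := Function.ne_iff.mp hk
  refine ⟨i, hi, (tsub_add_cancel_of_le fun j => ?_).symm⟩
  rcases eq_or_ne j i with rfl | hj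
  · simpa [Nat.one_le_iff_ne_zero] using hi
  · simp [hj]

theorem Pi.induction_add_single {ι : Type*} [Fintype ι] [DecidableEq ι] {P : (ι → ℕ) → Prop}
    (zero : P 0) (add_single : ∀ k i, P k → P (k + Pi.single i 1)) (k : ι → ℕ) : P k := by
  induction h : ∑ i, k i generalizing k with
  | zero =>
    obtain rfl : k = 0 := funext fun i => Finset.sum_eq_zero_iff.mp h i (Finset.mem_univ i)
    exact zero
  | succ N ih =>
    obtain ⟨i, -, hk⟩ := Pi.exists_eq_add_single_of_ne_zero (k := k) (by rintro rfl; simp at h)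
    rw [hk]
    refine add_single _ i (ih _ ?_)
    rw [hk] at h
    simpa [Finset.sum_add_distrib] using h

theorem Function.update_sub_one_eq_iff {ι : Type*} [DecidableEq ι] {m k : ι → ℕ} {i : ι}
    (hm : m i ≠ 0) : Function.update m i (m i - 1) = k ↔ m = k + Pi.single i 1 := by
  simp only [funext_iff]
  refine forall_congr' fun j => ?_
  rcases eq_or_ne j i with rfl | hj
  · simp only [Function.update_self, Pi.add_apply, Pi.single_eq_same]
    omega
  · simp [hj]

def loweringWeight (q : ℝ) {n : ℕ} (i : Fin n) (k : Fin n → ℕ) : ℝ :=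
  q ^ (∑ j ∈ Finset.Iio i, k j) * √(1 - q ^ ((if (i : ℕ) + 1 = n then 4 else 2) * k i))

theorem loweringWeight_eq_zero {q : ℝ} {n : ℕ} {i : Fin n} {k : Fin n → ℕ} (hk : k i = 0) :
    loweringWeight q i k = 0 := by
  simp [loweringWeight, hk]

theorem loweringWeight_pos {q : ℝ} (hq0 : 0 < q) (hq1 : q < 1) {n : ℕ} {i : Fin n}
    {k : Fin n → ℕ} (hk : k i ≠ 0) : 0 < loweringWeight q i k := by
  refine mul_pos (pow_pos hq0 _) (Real.sqrt_pos.mpr (sub_pos.mpr (pow_lt_one₀ hq0.le hq1 ?_)))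
  split_ifs <;> omega

namespace IsPiRep

variable {q : ℝ} {n : ℕ} {lam : ℂ} {Y : Fin (n + 1) → lpH n →L[ℂ] lpH n}

theorem apply_basisE_castSucc (hY : IsPiRep q lam Y) (i : Fin n) (k : Fin n → ℕ) :
    Y i.castSucc (basisE k)
      = (loweringWeight q i k : ℂ) • basisE (Function.update k i (k i - 1)) := by
  by_cases hi : (i : ℕ) + 1 = n
  · simpa [loweringWeight, hi] using hY.2.1 i hi k
  · simpa [loweringWeight, hi] using hY.1 i (lt_of_le_of_ne i.isLt hi) k

theorem apply_castSucc_basisE_zero (hY : IsPiRep q lam Y) (i : Fin n) :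
    Y i.castSucc (basisE 0) = 0 := by
  rw [hY.apply_basisE_castSucc, loweringWeight_eq_zero rfl, Complex.ofReal_zero, zero_smul]

theorem adjoint_apply_basisE (hY : IsPiRep q lam Y) (i : Fin n) (k : Fin n → ℕ) :
    adjoint (Y i.castSucc) (basisE k)
      = (loweringWeight q i (k + Pi.single i 1) : ℂ) • basisE (k + Pi.single i 1) := by
  have h := lp.adjoint_single_eq_of_apply_single (hY.apply_basisE_castSucc i)
    (fun k m hm => Function.update_sub_one_eq_iff
      (mt loweringWeight_eq_zero (Complex.ofReal_ne_zero.mp hm))) k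
  rw [Complex.conj_ofReal] at h
  exact h

theorem apply_castSucc_apply (hY : IsPiRep q lam Y) (i : Fin n) (v : lpH n) (k : Fin n → ℕ) :
    Y i.castSucc v k = loweringWeight q i (k + Pi.single i 1) * v (k + Pi.single i 1) := by
  simpa using lp.apply_eq_of_adjoint_single (hY.adjoint_apply_basisE i) v k

theorem eq_smul_basisE_zero (hY : IsPiRep q lam Y) (hq0 : 0 < q) (hq1 : q < 1) {v : lpH n}
    (hv : ∀ i : Fin n, Y i.castSucc v = 0) : v = v 0 • basisE 0 := by
  ext m
  rcases eq_or_ne m 0 with rfl | hm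
  · simp [basisE]
  obtain ⟨i, hmi, hm_eq⟩ := Pi.exists_eq_add_single_of_ne_zero hm
  have hcoord := hY.apply_castSucc_apply i v (m - Pi.single i 1)
  rw [← hm_eq, hv i] at hcoord
  have hweight : (loweringWeight q i m : ℂ) ≠ 0 :=
    Complex.ofReal_ne_zero.mpr (loweringWeight_pos hq0 hq1 hmi).ne'
  have hvm : v m = 0 := (mul_eq_zero.mp hcoord.symm).resolve_left hweight
  simp [hvm, basisE, hm]

theorem basisE_mem (hY : IsPiRep q lam Y) (hq0 : 0 < q) (hq1 : q < 1)
    {W : Submodule ℂ (lpH n)} (hW : ∀ i : Fin n, ∀ v ∈ W, adjoint (Y i.castSucc) v ∈ W)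
    (h0 : basisE 0 ∈ W) (k : Fin n → ℕ) : basisE k ∈ W := by
  induction k using Pi.induction_add_single with
  | zero => exact h0
  | add_single k i hk =>
    have hweight : (loweringWeight q i (k + Pi.single i 1) : ℂ) ≠ 0 :=
      Complex.ofReal_ne_zero.mpr (loweringWeight_pos hq0 hq1 (by simp)).ne'
    have h := W.smul_mem (loweringWeight q i (k + Pi.single i 1) : ℂ)⁻¹ (hW i _ hk)
    rwa [hY.adjoint_apply_basisE, smul_smul, inv_mul_cancel₀ hweight, one_smul] at h

end IsPiRep

theorem piRep_irreducible_general (q : ℝ) (hq0 : 0 < q) (hq1 : q < 1) (n : ℕ)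
    (lam : ℂ) (Y : Fin (n + 1) → lpH n →L[ℂ] lpH n)
    (hY : IsPiRep q lam Y) :
    IsIrreducibleFamily Y := by
  intro V hV hVY
  have : CompleteSpace V := hV.completeSpace_coe
  have hP (i : Fin n) : Commute V.starProjection (Y i.castSucc) :=
    V.commute_starProjection_of_invariant (fun v hv => (hVY _ v hv).1)
      (fun v hv => (hVY _ v hv).2)
  obtain ⟨c, hc⟩ : ∃ c : ℂ, V.starProjection (basisE 0) = c • basisE 0 :=
    ⟨_, hY.eq_smul_basisE_zero hq0 hq1 fun i => by
      rw [← mul_apply_eq_comp, ← (hP i).eq, mul_apply_eq_comp, hY.apply_castSucc_basisE_zero,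
        map_zero]⟩
  rcases eq_or_ne c 0 with rfl | hc0
  · left
    have h0 : basisE 0 ∈ Vᗮ := V.starProjection_apply_eq_zero_iff.mp (by rw [hc, zero_smul])
    have hVY_orth (i : Fin n) : ∀ v ∈ Vᗮ, adjoint (Y i.castSucc) v ∈ Vᗮ :=
      orthogonal_mem_invtSubmodule (T := adjoint (Y i.castSucc))
        (by rw [adjoint_adjoint]; exact fun v hv => (hVY _ v hv).1)
    exact le_bot_iff.mp (V.le_orthogonal_orthogonal.trans
      (lp.orthogonal_eq_bot_of_forall_single_mem (hY.basisE_mem hq0 hq1 hVY_orth h0)).le)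
  · right
    have h0 : basisE 0 ∈ V := by
      have h := V.smul_mem c⁻¹ (V.starProjection_apply_mem (basisE 0))
      rwa [hc, smul_smul, inv_mul_cancel₀ hc0, one_smul] at h
    exact Submodule.orthogonal_eq_bot_iff.mp (lp.orthogonal_eq_bot_of_forall_single_mem
      (hY.basisE_mem hq0 hq1 (fun i v hv => (hVY _ v hv).2) h0))

/-- The representation `π_λ` is irreducible. -/
theorem piRep_irreducible (q : ℝ) (hq0 : 0 < q) (hq1 : q < 1) (n : ℕ) (hn : 1 ≤ n)
    (lam : ℂ) (hlam : ‖lam‖ = 1) (Y : Fin (n + 1) → lpH n →L[ℂ] lpH n)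
    (hY : IsPiRep q lam Y) :
    IsIrreducibleFamily Y :=
  piRep_irreducible_general q hq0 hq1 n lam Y hY
end
end

section
/- Let A and B be bounded operators on a complex Hilbert space H with A ≥ 0 (A positive), and let 0<μ<1 be a real number. Assume BB* − B*B = (1−μ)A and A + B*B = 1. Then ker(B) = {0} if and only if A = 0. -/
open ContinuousLinearMap

noncomputable section

/-! With `B*B = 1 - A` and `BB* = 1 - μA`, comparing `B*(BB*)` with `(B*B)B*` gives
`AB* = μB*A`, hence `A^k (1 - A) = μ^k B* A^k B` and `‖A^k - A^(k+1)‖ ≤ μ^k ‖B‖²‖A‖^k`.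
As `0 ≤ A ≤ 1` and `‖A^k‖ = ‖A‖^k`, this forces `‖A‖ = 1` when `A ≠ 0`, and then `(A^k)` is
Cauchy; its limit `P` has norm `1` and satisfies `AP = P`, so `B*BP = 0` and `BP = 0`.
Conversely, `A = 0` makes `B` an isometry. -/

open Filter Topology

section Algebra

variable {𝕜 R : Type*} [CommSemiring 𝕜] [Ring R] [Algebra 𝕜 R] {a b b' : R} {c : 𝕜}

theorem mul_eq_smul_mul_of_mul_eq_one_sub (hb : b' * b = 1 - a) (hb' : b * b' = 1 - c • a) :
    a * b' = c • (b' * a) := by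
  have h : b' * (b * b') = (b' * b) * b' := (mul_assoc _ _ _).symm
  rw [hb, hb', mul_sub, sub_mul, mul_one, one_mul, mul_smul_comm] at h
  exact (sub_right_injective h).symm

theorem pow_mul_eq_smul_mul_pow (h : a * b' = c • (b' * a)) (k : ℕ) :
    a ^ k * b' = c ^ k • (b' * a ^ k) := by
  induction k with
  | zero => simp
  | succ k ih =>
    rw [pow_succ', mul_assoc, ih, mul_smul_comm, ← mul_assoc, h, smul_mul_assoc, smul_smul,
      mul_assoc, pow_succ]

theorem pow_mul_one_sub_eq_smul (hb : b' * b = 1 - a) (hb' : b * b' = 1 - c • a) (k : ℕ) :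
    a ^ k * (1 - a) = c ^ k • (b' * a ^ k * b) := by
  rw [← hb, ← mul_assoc, pow_mul_eq_smul_mul_pow (mul_eq_smul_mul_of_mul_eq_one_sub hb hb'),
    smul_mul_assoc]

end Algebra

section CStarAlgebra

variable {A : Type*} [CStarAlgebra A] {a b : A} {c : ℂ}

theorem norm_pow_sub_pow_succ_le [Nontrivial A] (hb : star b * b = 1 - a)
    (hb' : b * star b = 1 - c • a) (k : ℕ) : ‖a ^ k - a ^ (k + 1)‖ ≤ ‖b‖ ^ 2 * (‖c‖ * ‖a‖) ^ k := by
  rw [pow_succ, ← mul_one_sub, pow_mul_one_sub_eq_smul hb hb', norm_smul, norm_pow]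
  calc ‖c‖ ^ k * ‖star b * a ^ k * b‖ ≤ ‖c‖ ^ k * (‖b‖ * ‖a‖ ^ k * ‖b‖) := by
        gcongr
        refine (norm_mul_le _ _).trans ?_
        gcongr
        refine (norm_mul_le _ _).trans ?_
        rw [norm_star]
        gcongr
        exact norm_pow_le a k
    _ = ‖b‖ ^ 2 * (‖c‖ * ‖a‖) ^ k := by ring

variable [PartialOrder A] [StarOrderedRing A]

theorem norm_le_one_of_star_mul_self_eq_one_sub (ha : 0 ≤ a) (hb : star b * b = 1 - a) :
    ‖a‖ ≤ 1 := by
  rw [CStarAlgebra.norm_le_one_iff_of_nonneg a ha, ← sub_nonneg, ← hb]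
  exact star_mul_self_nonneg b

theorem norm_pow_of_nonneg [Nontrivial A] (ha : 0 ≤ a) (k : ℕ) : ‖a ^ k‖ = ‖a‖ ^ k := by
  rcases Nat.eq_zero_or_pos k with rfl | hk
  · simp
  · rw [← CFC.rpow_natCast a k, CFC.norm_rpow a (by exact_mod_cast hk) ha, Real.rpow_natCast]

theorem norm_eq_one_of_star_mul_self_eq_one_sub (ha : 0 ≤ a) (ha0 : a ≠ 0)
    (hb : star b * b = 1 - a) (hb' : b * star b = 1 - c • a) (hc : ‖c‖ < 1) : ‖a‖ = 1 := by
  have : Nontrivial A := nontrivial_of_ne a 0 ha0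
  have hpos : 0 < ‖a‖ := norm_pos_iff.mpr ha0
  have hgap (k : ℕ) : 1 - ‖a‖ ≤ ‖b‖ ^ 2 * ‖c‖ ^ k := by
    have h := (norm_sub_norm_le _ _).trans (norm_pow_sub_pow_succ_le hb hb' k)
    rw [norm_pow_of_nonneg ha, norm_pow_of_nonneg ha, mul_pow, pow_succ] at h
    have hk : 0 < ‖a‖ ^ k := pow_pos hpos k
    nlinarith
  have hlim : Tendsto (fun k : ℕ ↦ ‖b‖ ^ 2 * ‖c‖ ^ k) atTop (𝓝 0) := by
    simpa using (tendsto_pow_atTop_nhds_zero_of_lt_one (norm_nonneg c) hc).const_mul (‖b‖ ^ 2)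
  linarith [norm_le_one_of_star_mul_self_eq_one_sub ha hb, ge_of_tendsto' hlim hgap]

theorem exists_mul_eq_zero_of_star_mul_self_eq_one_sub (ha : 0 ≤ a) (ha0 : a ≠ 0)
    (hb : star b * b = 1 - a) (hb' : b * star b = 1 - c • a) (hc : ‖c‖ < 1) :
    ∃ p : A, p ≠ 0 ∧ b * p = 0 := by
  have : Nontrivial A := nontrivial_of_ne a 0 ha0
  have hnorm := norm_eq_one_of_star_mul_self_eq_one_sub ha ha0 hb hb' hc
  have hstep (k : ℕ) : dist (a ^ k) (a ^ (k + 1)) ≤ ‖b‖ ^ 2 * ‖c‖ ^ k := by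
    simpa [dist_eq_norm, hnorm] using norm_pow_sub_pow_succ_le hb hb' k
  obtain ⟨p, hp⟩ := cauchySeq_tendsto_of_complete (cauchySeq_of_le_geometric _ _ hc hstep)
  have hap : a * p = p := by
    refine tendsto_nhds_unique ((hp.const_mul a).congr fun k ↦ (pow_succ' a k).symm) ?_
    exact (tendsto_add_atTop_iff_nat 1).mpr hp
  have hp1 : ‖p‖ = 1 := by
    refine tendsto_nhds_unique hp.norm (tendsto_const_nhds.congr fun k ↦ ?_)
    rw [norm_pow_of_nonneg ha, hnorm, one_pow]
  refine ⟨p, norm_ne_zero_iff.mp (by simp [hp1]), ?_⟩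
  rw [← CStarRing.star_mul_self_eq_zero_iff, star_mul, mul_assoc, ← mul_assoc (star b), hb,
    sub_mul, one_mul, hap, sub_self, mul_zero]

end CStarAlgebra

/-- Lemma 4 of the paper: if `A ≥ 0`, `BB* - B*B = (1-μ)A` and `A + B*B = 1` with
`0 < μ < 1`, then `ker B = {0}` iff `A = 0`. -/
theorem kernel_trivial_iff_A_eq_zero
    {H : Type*} [NormedAddCommGroup H] [InnerProductSpace ℂ H] [CompleteSpace H]
    (A B : H →L[ℂ] H) (hA : A.IsPositive) (μ : ℝ) (hμ0 : 0 < μ) (hμ1 : μ < 1)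
    (h1 : B * adjoint B - adjoint B * B = ((1 - μ : ℝ) : ℂ) • A)
    (h2 : A + adjoint B * B = 1) :
    LinearMap.ker (B : H →ₗ[ℂ] H) = ⊥ ↔ A = 0 := by
  have hA' : 0 ≤ A := (nonneg_iff_isPositive A).mpr hA
  have hBB : adjoint B * B = 1 - A := eq_sub_of_add_eq' h2
  constructor
  · intro hker
    by_contra hA0
    have hBB' : B * adjoint B = 1 - (μ : ℂ) • A := by
      rw [sub_eq_iff_eq_add.mp h1, hBB]
      push_cast
      module
    have hμ : ‖(μ : ℂ)‖ < 1 := by rwa [Complex.norm_real, Real.norm_of_nonneg hμ0.le]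
    obtain ⟨P, hP0, hBP⟩ :=
      exists_mul_eq_zero_of_star_mul_self_eq_one_sub hA' hA0 hBB hBB' hμ
    obtain ⟨x, hx⟩ := DFunLike.ne_iff.mp hP0
    exact hx (LinearMap.ker_eq_bot'.mp hker (P x) congr($hBP x))
  · rintro rfl
    exact LinearMap.ker_eq_bot'.mpr fun x hx ↦ by
      simpa [show B x = 0 from hx] using congr($h2 x).symm
end
end

section
/- Let (Y_1,…,Y_{n+1}) be a Σ_q-family on a complex Hilbert space H. Then for all integers m≥1 and all indices 1≤i<n: Y_i(Y_i*)^m = q^{2m}(Y_i*)^m Y_i + (1−q^{2m})(Y_i*)^{m−1}(1 − Σ_{k=1}^{i−1} Y_k*Y_k). -/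
open ContinuousLinearMap

noncomputable section

set_option maxHeartbeats 1000000 in
private lemma aux_pow_step {R : Type*} [Ring R] [Module ℂ R] [SMulCommClass ℂ R R]
    [IsScalarTower ℂ R R] (A B S : R) (c : ℂ)
    (key1 : A * B = c ^ 2 • (B * A) + (1 - c ^ 2) • S) (key2 : S * B = B * S) :
    ∀ m : ℕ, A * B ^ (m + 1)
      = c ^ (2 * (m + 1)) • (B ^ (m + 1) * A) + (1 - c ^ (2 * (m + 1))) • (B ^ m * S) := by
  intro m
  induction m with
  | zero => simpa using key1
  | succ m ih =>
    have e0 : A * B ^ (m + 1 + 1) = (A * B ^ (m + 1)) * B := by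
      rw [pow_succ, ← mul_assoc]
    have eA : B ^ (m + 1 + 1) * A = B ^ (m + 1) * (B * A) := by
      rw [pow_succ, mul_assoc]
    have eS : B ^ (m + 1) * S = B ^ m * (B * S) := by
      rw [pow_succ, mul_assoc]
    rw [e0, ih, add_mul, smul_mul_assoc, smul_mul_assoc,
        mul_assoc (B ^ (m + 1)) A B, key1, mul_assoc (B ^ m) S B, key2]
    simp only [mul_add, mul_smul_comm]
    rw [eA, eS]
    match_scalars <;> ring

set_option maxHeartbeats 1000000 in
/-- Lemma 3 of the paper, first identity: for `m ≥ 1` and `1 ≤ i < n` (here the index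
`i : Fin (n+1)` with `(i : ℕ) + 1 < n` corresponds to `Y_{i+1}`),
`Y_i (Y_i*)^m = q^{2m} (Y_i*)^m Y_i + (1 - q^{2m}) (Y_i*)^{m-1} (1 - ∑_{k<i} Y_k* Y_k)`. -/
theorem aux_identity_lt (q : ℝ) (hq0 : 0 < q) (hq1 : q < 1) (n : ℕ) (hn : 1 ≤ n)
    {H : Type*} [NormedAddCommGroup H] [InnerProductSpace ℂ H] [CompleteSpace H]
    (Y : Fin (n + 1) → H →L[ℂ] H) (hY : IsSigmaQFamily q Y)
    (m : ℕ) (hm : 1 ≤ m) (i : Fin (n + 1)) (hi : (i : ℕ) + 1 < n) :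
    Y i * (adjoint (Y i)) ^ m
      = ((q ^ (2 * m) : ℝ) : ℂ) • ((adjoint (Y i)) ^ m * Y i)
        + ((1 - q ^ (2 * m) : ℝ) : ℂ) •
            ((adjoint (Y i)) ^ (m - 1) * (1 - ∑ k ∈ Finset.Iio i, adjoint (Y k) * Y k)) := by

  obtain ⟨h1, h2, h3, h4, h5⟩ := hY
  have hq : (q : ℂ) ≠ 0 := by exact_mod_cast hq0.ne'
  have hsplit : (∑ k, adjoint (Y k) * Y k)
      = (∑ k ∈ Finset.Iio i, adjoint (Y k) * Y k)
        + (adjoint (Y i) * Y i + ∑ k ∈ Finset.Ioi i, adjoint (Y k) * Y k) := by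
    have huniv : (Finset.univ : Finset (Fin (n + 1)))
        = Finset.Iio i ∪ insert i (Finset.Ioi i) := by
      ext x; simp; omega
    rw [huniv, Finset.sum_union (by simp [Finset.disjoint_left]), Finset.sum_insert (by simp)]
  have hIoi : ∑ k ∈ Finset.Ioi i, adjoint (Y k) * Y k
      = (1 - ∑ k ∈ Finset.Iio i, adjoint (Y k) * Y k) - adjoint (Y i) * Y i := by
    rw [← h5, hsplit]; abel
  have key1 : Y i * adjoint (Y i)
      = ((q : ℂ)) ^ 2 • (adjoint (Y i) * Y i)
        + (1 - ((q : ℂ)) ^ 2) • (1 - ∑ k ∈ Finset.Iio i, adjoint (Y k) * Y k) := by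
    have h := h3 i (by omega)
    rw [hIoi] at h
    have h' : Y i * adjoint (Y i)
        = adjoint (Y i) * Y i + ((1 - q ^ 2 : ℝ) : ℂ) •
            ((1 - ∑ k ∈ Finset.Iio i, adjoint (Y k) * Y k) - adjoint (Y i) * Y i) := by
      rw [← h]; abel
    rw [h']
    push_cast
    module
  have key2 : (1 - ∑ k ∈ Finset.Iio i, adjoint (Y k) * Y k) * adjoint (Y i)
      = adjoint (Y i) * (1 - ∑ k ∈ Finset.Iio i, adjoint (Y k) * Y k) := by
    rw [sub_mul, mul_sub, one_mul, mul_one, Finset.sum_mul, Finset.mul_sum]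
    congr 1
    apply Finset.sum_congr rfl
    intro k hk
    have hk' : k < i := Finset.mem_Iio.mp hk
    have hcond : ¬((i : ℕ) = n ∧ (k : ℕ) + 1 = n) := by omega
    obtain ⟨r1, r2⟩ := h1 i k hk' hcond
    have r3 : adjoint (Y k) * adjoint (Y i)
        = (q : ℂ)⁻¹ • (adjoint (Y i) * adjoint (Y k)) := by
      have := congrArg star r1
      simpa [star_eq_adjoint, star_smul, Complex.star_def, Complex.conj_ofReal,
        map_inv₀, star_mul] using this
    have r2' : Y k * adjoint (Y i) = (q : ℂ) • (adjoint (Y i) * Y k) := by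
      rw [r2, smul_smul, mul_inv_cancel₀ hq, one_smul]
    calc (adjoint (Y k) * Y k) * adjoint (Y i)
        = adjoint (Y k) * (Y k * adjoint (Y i)) := mul_assoc _ _ _
      _ = (q : ℂ) • (adjoint (Y k) * adjoint (Y i) * Y k) := by
          rw [r2', mul_smul_comm, mul_assoc]
      _ = (q : ℂ) • ((q : ℂ)⁻¹ • (adjoint (Y i) * adjoint (Y k)) * Y k) := by rw [r3]
      _ = adjoint (Y i) * (adjoint (Y k) * Y k) := by
          rw [smul_mul_assoc, smul_smul, mul_inv_cancel₀ hq, one_smul, mul_assoc]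
  obtain ⟨m', rfl⟩ : ∃ m', m = m' + 1 := ⟨m - 1, by omega⟩
  have main := aux_pow_step (Y i) (adjoint (Y i))
    (1 - ∑ k ∈ Finset.Iio i, adjoint (Y k) * Y k) (q : ℂ) key1 key2 m'
  push_cast
  simpa using main
end
end

section
/- Let (Y_1,…,Y_{n+1}) be a Σ_q-family on a complex Hilbert space H. Then for all integers m≥1: Y_n(Y_n*)^m = q^{4m}(Y_n*)^m Y_n + (1−q^{4m})(Y_n*)^{m−1}(1 − Σ_{k=1}^{n−1} Y_k*Y_k). -/
open ContinuousLinearMap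

noncomputable section

/-- Lemma 3 of the paper, second identity: for `m ≥ 1` and `i = n` (here the index
`i : Fin (n+1)` with `(i : ℕ) + 1 = n` corresponds to `Y_n`),
`Y_n (Y_n*)^m = q^{4m} (Y_n*)^m Y_n + (1 - q^{4m}) (Y_n*)^{m-1} (1 - ∑_{k<n} Y_k* Y_k)`. -/
theorem aux_identity_n (q : ℝ) (hq0 : 0 < q) (hq1 : q < 1) (n : ℕ) (hn : 1 ≤ n)
    {H : Type*} [NormedAddCommGroup H] [InnerProductSpace ℂ H] [CompleteSpace H]
    (Y : Fin (n + 1) → H →L[ℂ] H) (hY : IsSigmaQFamily q Y)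
    (m : ℕ) (hm : 1 ≤ m) (i : Fin (n + 1)) (hi : (i : ℕ) + 1 = n) :
    Y i * (adjoint (Y i)) ^ m
      = ((q ^ (4 * m) : ℝ) : ℂ) • ((adjoint (Y i)) ^ m * Y i)
        + ((1 - q ^ (4 * m) : ℝ) : ℂ) •
            ((adjoint (Y i)) ^ (m - 1) * (1 - ∑ k ∈ Finset.Iio i, adjoint (Y k) * Y k)) := by

  classical
  obtain ⟨hR1, hR2, hR3, hR4, hR5⟩ := hY
  have hqC : (q : ℂ) ≠ 0 := by
    simp only [ne_eq, Complex.ofReal_eq_zero]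
    exact hq0.ne'
  set A := adjoint (Y i) with hA
  set B := Y i with hB
  set S := ∑ k ∈ Finset.Iio i, adjoint (Y k) * Y k with hS
  -- S commutes with A
  have hSA : S * A = A * S := by
    rw [hS, Finset.sum_mul, Finset.mul_sum]
    refine Finset.sum_congr rfl ?_
    intro k hk
    have hki : k < i := Finset.mem_Iio.mp hk
    have hki' : (k : ℕ) < (i : ℕ) := hki
    have hcond : ¬((i : ℕ) = n ∧ (k : ℕ) + 1 = n) := by omega
    obtain ⟨h1, h2⟩ := hR1 i k hki hcond
    have h2' : Y k * A = (q : ℂ) • (A * Y k) := by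
      rw [hA, h2, smul_smul, mul_inv_cancel₀ hqC, one_smul]
    have h1' : adjoint (Y k) * A = ((q : ℂ))⁻¹ • (A * adjoint (Y k)) := by
      have := congrArg star h1
      simp only [star_mul, star_smul, star_eq_adjoint, star_inv₀, Complex.star_def,
        Complex.conj_ofReal] at this
      rw [hA, this]
    calc adjoint (Y k) * Y k * A = adjoint (Y k) * (Y k * A) := by rw [mul_assoc]
      _ = (q : ℂ) • (adjoint (Y k) * A * Y k) := by
          rw [h2', mul_smul_comm, mul_assoc]
      _ = (q : ℂ) • (((q : ℂ))⁻¹ • (A * adjoint (Y k) * Y k)) := by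
          rw [h1', smul_mul_assoc]
      _ = A * (adjoint (Y k) * Y k) := by
          rw [smul_smul, mul_inv_cancel₀ hqC, one_smul, mul_assoc]
  -- partition of the sum from (R5)
  have hilt : i < Fin.last n := by
    rw [Fin.lt_iff_val_lt_val, Fin.val_last]; omega
  have huniv : (Finset.univ : Finset (Fin (n + 1)))
      = insert i (insert (Fin.last n) (Finset.Iio i)) := by
    ext k
    simp only [Finset.mem_univ, Finset.mem_insert, Finset.mem_Iio, true_iff]
    rcases lt_trichotomy k i with h | h | h
    · exact Or.inr (Or.inr h)
    · exact Or.inl h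
    · refine Or.inr (Or.inl ?_)
      have h' : (i : ℕ) < (k : ℕ) := h
      have hk : (k : ℕ) = n := by omega
      exact Fin.ext (by simpa using hk)
  have hT : adjoint (Y (Fin.last n)) * Y (Fin.last n) = 1 - S - A * B := by
    have h5 := hR5
    rw [huniv, Finset.sum_insert, Finset.sum_insert] at h5
    · rw [← hA, ← hB, ← hS] at h5
      have : A * B + (adjoint (Y (Fin.last n)) * Y (Fin.last n) + S) = 1 := h5
      abel_nf
      abel_nf at this
      linear_combination (norm := abel) this
    · simp only [Finset.mem_Iio]
      exact fun h => absurd (hilt.trans h) (lt_irrefl i)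
    · simp only [Finset.mem_insert, Finset.mem_Iio]
      rintro (h | h)
      · exact absurd h hilt.ne
      · exact absurd h (lt_irrefl i)
  -- base identity
  have hbase : B * A = ((q ^ 4 : ℝ) : ℂ) • (A * B) + ((1 - q ^ 4 : ℝ) : ℂ) • (1 - S) := by
    have h4 := hR4 i hi
    rw [hT, ← hA, ← hB, sub_eq_iff_eq_add] at h4
    rw [h4]
    push_cast
    module
  -- induction on m
  induction m with
  | zero => omega
  | succ m ih =>
    rcases Nat.eq_or_lt_of_le hm with hm1 | hm1
    · -- m + 1 = 1
      have hm0 : m = 0 := by omega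
      subst hm0
      simpa using hbase
    · have hm' : 1 ≤ m := by omega
      have IH := ih hm'
      have hpow : A ^ (m - 1) * A = A ^ m := by
        rw [← pow_succ]
        congr 1
        omega
      have hstep : B * A ^ (m + 1) = (B * A ^ m) * A := by
        rw [pow_succ, ← mul_assoc]
      rw [hstep, IH, add_mul, smul_mul_assoc, smul_mul_assoc, mul_assoc, hbase,
        mul_assoc, sub_mul, one_mul, hSA]
      have hfix : A ^ (m - 1) * (A - A * S) = A ^ m * (1 - S) := by
        rw [show A - A * S = A * (1 - S) by rw [mul_sub, mul_one], ← mul_assoc, hpow]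
      rw [hfix]
      simp only [Nat.add_sub_cancel, pow_succ, mul_assoc, mul_add, mul_smul_comm,
        smul_add, smul_smul]
      push_cast
      match_scalars <;> ring
end
end

section
/- Let (Y_1,…,Y_{n+1}) be an irreducible Σ_q-family on a complex Hilbert space H with Y_{n+1}≠0. Then Y_{n+1} is injective, i.e., ker(Y_{n+1}) = {0}. -/
open ContinuousLinearMap

noncomputable section

/-!
`Y_{n+1}` is normal (relation (R3) for `i = n+1` has an empty sum), and by (R1)/(R2) both
`Y_{n+1}` and `Y_{n+1}*` `q`-commute with every `Y_i`. Hence `ker Y_{n+1}` is a closed subspace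
invariant under all `Y_i` and `Y_i*`; by irreducibility it is `0` or `H`, and it is not `H`
because `Y_{n+1} ≠ 0`.
-/

theorem apply_apply_eq_zero_of_mul_eq_smul_mul {𝕜 E : Type*} [NontriviallyNormedField 𝕜]
    [NormedAddCommGroup E] [NormedSpace 𝕜 E] {A T : E →L[𝕜] E} {c : 𝕜} {v : E}
    (h : A * T = c • (T * A)) (hv : A v = 0) : A (T v) = 0 := by
  simpa [hv] using congr($h v)

theorem apply_adjoint_apply_eq_zero_of_adjoint_mul_eq_smul_mul {𝕜 E : Type*} [RCLike 𝕜]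
    [NormedAddCommGroup E] [InnerProductSpace 𝕜 E] [CompleteSpace E] {A T : E →L[𝕜] E}
    {c : 𝕜} {v : E} (hc : c ≠ 0) (h : adjoint A * T = c • (T * adjoint A)) (hv : A v = 0) :
    A (adjoint T v) = 0 := by
  -- `c ≠ 0` is needed because taking adjoints puts `star c` on the side of `A (T* v)`.
  have h' : adjoint T * A = star c • (A * adjoint T) := by
    simpa [map_smulₛₗ, adjoint_comp, mul_def] using congr(adjoint $h)
  simpa [hv, hc] using congr($h' v).symm

namespace IsSigmaQFamily

variable {q : ℝ} {n : ℕ} {H : Type*} [NormedAddCommGroup H] [InnerProductSpace ℂ H]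
  [CompleteSpace H] {Y : Fin (n + 1) → H →L[ℂ] H}

theorem last_mul_adjoint_eq (hY : IsSigmaQFamily q Y) :
    Y (Fin.last n) * adjoint (Y (Fin.last n)) = adjoint (Y (Fin.last n)) * Y (Fin.last n) := by
  have h := hY.2.2.1 (Fin.last n) (by simp)
  rwa [Finset.Ioi_eq_empty.mpr fun b _ => Fin.le_last b, Finset.sum_empty, smul_zero,
    sub_eq_zero] at h

theorem exists_last_qcommute (hq : q ≠ 0) (hY : IsSigmaQFamily q Y) (i : Fin (n + 1)) :
    ∃ c : ℂ, c ≠ 0 ∧ Y (Fin.last n) * Y i = c • (Y i * Y (Fin.last n)) ∧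
      adjoint (Y (Fin.last n)) * Y i = c • (Y i * adjoint (Y (Fin.last n))) := by
  have hqC : (q : ℂ)⁻¹ ≠ 0 := inv_ne_zero (Complex.ofReal_ne_zero.mpr hq)
  rcases (Fin.le_last i).lt_or_eq with hlt | rfl
  · by_cases hpred : (i : ℕ) + 1 = n
    · exact ⟨_, pow_ne_zero 2 hqC, hY.2.1 i hpred⟩
    · exact ⟨_, hqC, hY.1 _ i hlt fun h => hpred h.2⟩
  · exact ⟨1, one_ne_zero, by rw [one_smul], by rw [one_smul, hY.last_mul_adjoint_eq]⟩

theorem ker_last_invariant (hq : q ≠ 0) (hY : IsSigmaQFamily q Y) (i : Fin (n + 1))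
    {v : H} (hv : Y (Fin.last n) v = 0) :
    Y (Fin.last n) (Y i v) = 0 ∧ Y (Fin.last n) (adjoint (Y i) v) = 0 := by
  obtain ⟨c, hc, hcomm, hcomm_adj⟩ := hY.exists_last_qcommute hq i
  exact ⟨apply_apply_eq_zero_of_mul_eq_smul_mul hcomm hv,
    apply_adjoint_apply_eq_zero_of_adjoint_mul_eq_smul_mul hc hcomm_adj hv⟩

end IsSigmaQFamily

theorem IsIrreducibleFamily.ker_eq_bot {n : ℕ} {H : Type*} [NormedAddCommGroup H]
    [InnerProductSpace ℂ H] [CompleteSpace H] {Y : Fin (n + 1) → H →L[ℂ] H}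
    (hirr : IsIrreducibleFamily Y) {A : H →L[ℂ] H} (hA : A ≠ 0)
    (hinv : ∀ i, ∀ v, A v = 0 → A (Y i v) = 0 ∧ A (adjoint (Y i) v) = 0) :
    LinearMap.ker (A : H →ₗ[ℂ] H) = ⊥ := by
  refine (hirr _ A.isClosed_ker fun i v hv => hinv i v hv).resolve_right fun htop => hA ?_
  ext v
  exact congr($(LinearMap.ker_eq_top.mp htop) v)

theorem last_injective_general (q : ℝ) (hq0 : 0 < q) (n : ℕ)
    {H : Type*} [NormedAddCommGroup H] [InnerProductSpace ℂ H] [CompleteSpace H]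
    (Y : Fin (n + 1) → H →L[ℂ] H) (hY : IsSigmaQFamily q Y)
    (hirr : IsIrreducibleFamily Y) (hne : Y (Fin.last n) ≠ 0) :
    LinearMap.ker (Y (Fin.last n) : H →ₗ[ℂ] H) = ⊥ :=
  hirr.ker_eq_bot hne fun i _ hv => hY.ker_last_invariant hq0.ne' i hv

/-- Lemma 5(i) of the paper: in an irreducible `Σ_q`-family with `Y_{n+1} ≠ 0`,
the operator `Y_{n+1}` is injective. -/
theorem last_injective (q : ℝ) (hq0 : 0 < q) (hq1 : q < 1) (n : ℕ) (hn : 1 ≤ n)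
    {H : Type*} [NormedAddCommGroup H] [InnerProductSpace ℂ H] [CompleteSpace H]
    (Y : Fin (n + 1) → H →L[ℂ] H) (hY : IsSigmaQFamily q Y)
    (hirr : IsIrreducibleFamily Y) (hne : Y (Fin.last n) ≠ 0) :
    LinearMap.ker (Y (Fin.last n) : H →ₗ[ℂ] H) = ⊥ :=
  last_injective_general q hq0 n Y hY hirr hne
end
end

section
/- Let (Y_1,…,Y_{n+1}) be an irreducible Σ_q-family on a complex Hilbert space H with Y_{n+1}≠0. Then there exists a nonzero vector ξ∈H such that Y_iξ = 0 for all 1≤i≤n; that is, the joint kernel ∩_{i=1}^n ker(Y_i) is nonzero. -/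
open ContinuousLinearMap

noncomputable section

section Aux

variable {H : Type*} [NormedAddCommGroup H] [InnerProductSpace ℂ H] [CompleteSpace H]

lemma aux_comm_pow (B T : H →L[ℂ] H) (μ : ℝ) (h : B * T = μ • (T * B)) (k : ℕ) :
    B * T ^ k = (μ ^ k) • (T ^ k * B) := by
  induction k with
  | zero => simp
  | succ k ih =>
    rw [pow_succ, ← mul_assoc, ih, smul_mul_assoc, mul_assoc, h, mul_smul_comm, smul_smul,
      ← mul_assoc, ← pow_succ, ← pow_succ]

lemma aux_comm_cfc_poly (B T : H →L[ℂ] H) (hT : IsSelfAdjoint T) (μ : ℝ)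
    (h : B * T = μ • (T * B)) (p : Polynomial ℝ) :
    B * cfc (fun x => p.eval x) T = cfc (fun x => p.eval (μ * x)) T * B := by
  induction p using Polynomial.induction_on' with
  | add p1 p2 hp1 hp2 =>
    simp only [Polynomial.eval_add]
    rw [cfc_add (a := T) (fun x => p1.eval x) (fun x => p2.eval x) p1.continuousOn p2.continuousOn,
      cfc_add (a := T) (fun x => p1.eval (μ * x)) (fun x => p2.eval (μ * x))
        ((p1.continuous.comp (continuous_const.mul continuous_id)).continuousOn)
        ((p2.continuous.comp (continuous_const.mul continuous_id)).continuousOn),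
      mul_add, add_mul, hp1, hp2]
  | monomial k c =>
    simp only [Polynomial.eval_monomial]
    have h1 : cfc (fun x : ℝ => c * x ^ k) T = c • T ^ k := by
      rw [cfc_const_mul c (fun x : ℝ => x ^ k) T, cfc_pow_id T k]
    have h2 : cfc (fun x : ℝ => c * (μ * x) ^ k) T = (c * μ ^ k) • T ^ k := by
      have he : (fun x : ℝ => c * (μ * x) ^ k) = fun x : ℝ => (c * μ ^ k) * x ^ k := by
        funext x; ring
      rw [he, cfc_const_mul (c * μ ^ k) (fun x : ℝ => x ^ k) T, cfc_pow_id T k]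
    rw [h1, h2, mul_smul_comm, aux_comm_pow B T μ h k, smul_smul, smul_mul_assoc]

lemma aux_spec_bound (T : H →L[ℂ] H) (hT : IsSelfAdjoint T) {x : ℝ}
    (hx : x ∈ spectrum ℝ T) : |x| ≤ ‖T‖ := by
  have := norm_apply_le_norm_cfc (id : ℝ → ℝ) T hx continuous_id.continuousOn hT
  rwa [cfc_id ℝ T, Real.norm_eq_abs] at this

lemma aux_comm_cfc (B T : H →L[ℂ] H) (hT : IsSelfAdjoint T) (μ : ℝ)
    (hμ0 : 0 ≤ μ) (hμ1 : μ ≤ 1) (h : B * T = μ • (T * B)) (f : ℝ → ℝ) (hf : Continuous f) :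
    B * cfc f T = cfc (fun x => f (μ * x)) T * B := by
  set g : ℝ → ℝ := fun x => f (μ * x) with hg
  have hgc : Continuous g := hf.comp (continuous_const.mul continuous_id)
  set M := ‖T‖ with hM
  have hσ : spectrum ℝ T ⊆ Set.Icc (-M) M := by
    intro x hx
    have := aux_spec_bound T hT hx
    exact Set.mem_Icc.mpr (abs_le.mp this)
  have hσμ : ∀ x ∈ spectrum ℝ T, μ * x ∈ Set.Icc (-M) M := by
    intro x hx
    have h1 := aux_spec_bound T hT hx
    have : |μ * x| ≤ M := by
      rw [abs_mul, abs_of_nonneg hμ0]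
      calc μ * |x| ≤ 1 * |x| := by nlinarith [abs_nonneg x]
        _ ≤ M := by linarith
    exact Set.mem_Icc.mpr (abs_le.mp this)
  have key : ∀ ε > (0:ℝ), ‖B * cfc f T - cfc g T * B‖ ≤ (2 * ‖B‖) * ε := by
    intro ε hε
    obtain ⟨p, hp⟩ := exists_polynomial_near_of_continuousOn (-M) M f hf.continuousOn ε hε
    have e1 : ‖cfc f T - cfc (fun x => p.eval x) T‖ ≤ ε := by
      rw [← cfc_sub f (fun x => p.eval x) T hf.continuousOn p.continuousOn]
      refine norm_cfc_le hε.le fun x hx => ?_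
      have := hp x (hσ hx)
      rw [Real.norm_eq_abs, abs_sub_comm]
      linarith
    have e2 : ‖cfc (fun x => p.eval (μ * x)) T - cfc g T‖ ≤ ε := by
      rw [← cfc_sub (fun x => p.eval (μ * x)) g T
        ((p.continuous.comp (continuous_const.mul continuous_id)).continuousOn)
        hgc.continuousOn]
      refine norm_cfc_le hε.le fun x hx => ?_
      have := hp (μ * x) (hσμ x hx)
      rw [Real.norm_eq_abs, hg]
      linarith [abs_le.mp (le_of_lt this)]
    have e3 := aux_comm_cfc_poly B T hT μ h p
    have hsplit : B * cfc f T - cfc g T * B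
        = B * (cfc f T - cfc (fun x => p.eval x) T)
          + (cfc (fun x => p.eval (μ * x)) T - cfc g T) * B
          + (B * cfc (fun x => p.eval x) T - cfc (fun x => p.eval (μ * x)) T * B) := by
      noncomm_ring
    rw [hsplit, e3, sub_self, add_zero]
    calc ‖B * (cfc f T - cfc (fun x => p.eval x) T)
          + (cfc (fun x => p.eval (μ * x)) T - cfc g T) * B‖
        ≤ ‖B * (cfc f T - cfc (fun x => p.eval x) T)‖
          + ‖(cfc (fun x => p.eval (μ * x)) T - cfc g T) * B‖ := norm_add_le _ _
      _ ≤ ‖B‖ * ‖cfc f T - cfc (fun x => p.eval x) T‖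
          + ‖cfc (fun x => p.eval (μ * x)) T - cfc g T‖ * ‖B‖ := by
          gcongr <;> [exact norm_mul_le _ _; exact norm_mul_le _ _]
      _ ≤ ‖B‖ * ε + ε * ‖B‖ := by
          gcongr
      _ = 2 * ‖B‖ * ε := by ring
  have hz : ‖B * cfc f T - cfc g T * B‖ ≤ 0 := by
    refine le_of_forall_pos_le_add fun ε hε => ?_
    have hc : (0:ℝ) < 2 * ‖B‖ + 1 := by positivity
    have h1 := key (ε / (2 * ‖B‖ + 1)) (by positivity)
    have h2 : 2 * ‖B‖ * (ε / (2 * ‖B‖ + 1)) ≤ ε := by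
      have hd : ε / (2 * ‖B‖ + 1) * (2 * ‖B‖ + 1) = ε := div_mul_cancel₀ ε hc.ne'
      nlinarith [norm_nonneg B, div_nonneg hε.le hc.le]
    linarith
  have := norm_le_zero_iff.mp hz
  exact sub_eq_zero.mp this

end Aux

section Aux2

variable {H : Type*} [NormedAddCommGroup H] [InnerProductSpace ℂ H] [CompleteSpace H]

lemma aux_twist (A B : H →L[ℂ] H) (c : ℂ) (hc : c ≠ 0)
    (h1 : A * B = c⁻¹ • (B * A)) (h2 : adjoint A * B = c⁻¹ • (B * adjoint A)) :
    B * (adjoint A * A) = (c ^ 2) • ((adjoint A * A) * B) := by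
  have k1 : B * A = c • (A * B) := by rw [h1, smul_smul, mul_inv_cancel₀ hc, one_smul]
  have k2 : B * adjoint A = c • (adjoint A * B) := by
    rw [h2, smul_smul, mul_inv_cancel₀ hc, one_smul]
  calc B * (adjoint A * A) = (B * adjoint A) * A := by rw [mul_assoc]
    _ = c • (adjoint A * B * A) := by rw [k2, smul_mul_assoc]
    _ = c • (adjoint A * (c • (A * B))) := by rw [mul_assoc, k1]
    _ = (c ^ 2) • (adjoint A * A * B) := by rw [mul_smul_comm, smul_smul, ← mul_assoc, sq]

end Aux2

theorem exists_joint_kernel_vector' (q : ℝ) (hq0 : 0 < q) (hq1 : q < 1) (n : ℕ) (hn : 1 ≤ n)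
    {H : Type*} [NormedAddCommGroup H] [InnerProductSpace ℂ H] [CompleteSpace H]
    (Y : Fin (n + 1) → H →L[ℂ] H)
    (hR1 : ∀ i j : Fin (n + 1), j < i → ¬((i : ℕ) = n ∧ (j : ℕ) + 1 = n) →
      Y i * Y j = ((q : ℂ))⁻¹ • (Y j * Y i) ∧
      adjoint (Y i) * Y j = ((q : ℂ))⁻¹ • (Y j * adjoint (Y i)))
    (hR2 : ∀ j : Fin (n + 1), (j : ℕ) + 1 = n →
      Y (Fin.last n) * Y j = (((q : ℂ))⁻¹ ^ 2) • (Y j * Y (Fin.last n)) ∧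
      adjoint (Y (Fin.last n)) * Y j = (((q : ℂ))⁻¹ ^ 2) • (Y j * adjoint (Y (Fin.last n))))
    (hne : Y (Fin.last n) ≠ 0) :
    ∃ ξ : H, ξ ≠ 0 ∧ ∀ i : Fin n, Y i.castSucc ξ = 0 := by
  have hqC : (q : ℂ) ≠ 0 := by exact_mod_cast hq0.ne'
  set A := Y (Fin.last n) with hAdef
  set T : H →L[ℂ] H := adjoint A * A with hTdef
  have hsa : IsSelfAdjoint T := by
    rw [hTdef, ← star_eq_adjoint]; exact IsSelfAdjoint.star_mul_self A
  have hM0 : 0 < ‖T‖ := by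
    have hTn : ‖T‖ = ‖A‖ * ‖A‖ := by
      rw [hTdef, ← star_eq_adjoint]; exact CStarRing.norm_star_mul_self
    have hA0 : 0 < ‖A‖ := norm_pos_iff.mpr hne
    rw [hTn]; nlinarith
  set M := ‖T‖ with hMdef
  have hq2 : q ^ 2 ≤ 1 := by nlinarith
  have hcomm : ∀ j : Fin n, ∃ μ : ℝ, 0 < μ ∧ μ ≤ q ^ 2 ∧
      Y j.castSucc * T = μ • (T * Y j.castSucc) := by
    intro j
    by_cases hj : (j : ℕ) + 1 = n
    · obtain ⟨h1, h2⟩ := hR2 j.castSucc (by simpa using hj)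
      rw [inv_pow] at h1 h2
      refine ⟨q ^ 4, by positivity, by nlinarith, ?_⟩
      have := aux_twist A (Y j.castSucc) ((q : ℂ) ^ 2) (pow_ne_zero 2 hqC) h1 h2
      rw [hTdef, this]
      have he2 : (((q : ℂ)) ^ 2) ^ 2 = (((q ^ 4 : ℝ)) : ℂ) := by push_cast; ring
      rw [he2, Complex.coe_smul]
    · obtain ⟨h1, h2⟩ := hR1 (Fin.last n) j.castSucc (Fin.castSucc_lt_last j)
        (fun hcon => hj (by simpa using hcon.2))
      refine ⟨q ^ 2, by positivity, le_refl _, ?_⟩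
      have := aux_twist A (Y j.castSucc) ((q : ℂ)) hqC h1 h2
      rw [hTdef, this]
      have he2 : ((q : ℂ)) ^ 2 = (((q ^ 2 : ℝ)) : ℂ) := by push_cast; ring
      rw [he2, Complex.coe_smul]
  set f : ℝ → ℝ := fun x => max (|x| - q ^ 2 * M) 0 with hfdef
  have hfc : Continuous f := (continuous_abs.sub continuous_const).max continuous_const
  have hzero : ∀ j : Fin n, Y j.castSucc * cfc f T = 0 := by
    intro j
    obtain ⟨μ, hμ0, hμle, hcm⟩ := hcomm j
    have hμ1 : μ ≤ 1 := le_trans hμle hq2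
    rw [aux_comm_cfc (Y j.castSucc) T hsa μ hμ0.le hμ1 hcm f hfc]
    have hcz : cfc (fun x => f (μ * x)) T = 0 := by
      have he : cfc (fun x => f (μ * x)) T = cfc (fun _ : ℝ => (0 : ℝ)) T := by
        apply cfc_congr
        intro x hx
        have hb := aux_spec_bound T hsa hx
        have habs : |μ * x| ≤ q ^ 2 * M := by
          rw [abs_mul, abs_of_pos hμ0]
          nlinarith [abs_nonneg x]
        simp only [hfdef]
        rw [max_eq_right]
        linarith
      rw [he]
      simpa using cfc_const (0 : ℝ) T hsa
    rw [hcz, zero_mul]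
  have hex : ∃ x ∈ spectrum ℝ T, q ^ 2 * M < |x| := by
    by_contra hcon
    push_neg at hcon
    have hle : ‖T‖ ≤ q ^ 2 * M := by
      have := norm_cfc_le (f := (id : ℝ → ℝ)) (a := T)
        (mul_nonneg (pow_nonneg hq0.le 2) hM0.le)
        (fun x hx => by simpa using hcon x hx)
      rwa [cfc_id ℝ T] at this
    rw [← hMdef] at hle
    nlinarith [mul_pos (show (0:ℝ) < 1 - q ^ 2 by nlinarith) hM0]
  obtain ⟨x, hxσ, hxgt⟩ := hex
  have hfT : cfc f T ≠ 0 := by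
    intro h0
    have hle := norm_apply_le_norm_cfc f T hxσ hfc.continuousOn hsa
    rw [h0, norm_zero, Real.norm_eq_abs] at hle
    have : 0 < f x := lt_of_lt_of_le (by linarith) (le_max_left (|x| - q ^ 2 * M) 0)
    rw [abs_of_pos this] at hle
    linarith
  obtain ⟨v, hv⟩ := DFunLike.ne_iff.mp hfT
  refine ⟨cfc f T v, by simpa using hv, fun j => ?_⟩
  calc Y j.castSucc (cfc f T v) = (Y j.castSucc * cfc f T) v := rfl
    _ = 0 := by rw [hzero j]; rfl


/-- Lemma 5(ii) of the paper: in an irreducible `Σ_q`-family with `Y_{n+1} ≠ 0`,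
there is a nonzero vector annihilated by `Y_1, …, Y_n`. -/
theorem exists_joint_kernel_vector (q : ℝ) (hq0 : 0 < q) (hq1 : q < 1) (n : ℕ) (hn : 1 ≤ n)
    {H : Type*} [NormedAddCommGroup H] [InnerProductSpace ℂ H] [CompleteSpace H]
    (Y : Fin (n + 1) → H →L[ℂ] H) (hY : IsSigmaQFamily q Y)
    (hirr : IsIrreducibleFamily Y) (hne : Y (Fin.last n) ≠ 0) :
    ∃ ξ : H, ξ ≠ 0 ∧ ∀ i : Fin n, Y i.castSucc ξ = 0 :=
  exists_joint_kernel_vector' q hq0 hq1 n hn Y hY.1 hY.2.1 hne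
end
end

section
/- Let (Y_1,…,Y_{n+1}) be a Σ_q-family on a complex Hilbert space H and let ξ∈H satisfy Y_iξ = 0 for all 1≤i≤n. For k∈ℕⁿ define |k⟩_ξ := ((q²;q²)_{k_1}⋯(q²;q²)_{k_{n-1}}(q⁴;q⁴)_{k_n})^{-1/2} (Y_1*)^{k_1}⋯(Y_n*)^{k_n} ξ, with the convention |k⟩_ξ := 0 if some component of k∈ℤⁿ is negative. Then for all k∈ℕⁿ: Y_i*|k⟩_ξ = q^{k_1+…+k_{i-1}}√(1−q^{2k_i+2}) |k+𝐞_i⟩_ξ for 1≤i<n; Y_n*|k⟩_ξ = q^{k_1+…+k_{n-1}}√(1−q^{4k_n+4}) |k+𝐞_n⟩_ξ; and Y_{n+1}|k⟩_ξ = q^{|k|+k_n} |k⟩_{Y_{n+1}ξ}. -/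
open ContinuousLinearMap

noncomputable section

/-- The q-shifted factorial `(a;b)_ℓ = ∏_{i=0}^{ℓ-1} (1 - a bⁱ)`. -/
def qPoch (a b : ℝ) (l : ℕ) : ℝ := ∏ i ∈ Finset.range l, (1 - a * b ^ i)

/-- The vector `|k⟩_ξ`. -/
def ket (q : ℝ) {n : ℕ} {H : Type*} [NormedAddCommGroup H]
    [InnerProductSpace ℂ H] [CompleteSpace H]
    (Y : Fin (n + 1) → H →L[ℂ] H) (ξ : H) (k : Fin n → ℕ) : H :=
  (((Real.sqrt (∏ i : Fin n,
      if (i : ℕ) + 1 = n then qPoch (q ^ 4) (q ^ 4) (k i) else qPoch (q ^ 2) (q ^ 2) (k i)))⁻¹ : ℝ) : ℂ) •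
    (List.ofFn fun i : Fin n => (adjoint (Y i.castSucc)) ^ (k i)).prod ξ

/-!
Read through adjoints, the commutation relations (R1) and (R2) say that the operators
`Y_1*, …, Y_n*` pairwise `q`-commute, and that `Y_{n+1}` passes each `Y_i*` at the cost of a
factor `q` (of `q²` for `Y_n*`). Hence `Y_i*` can be moved into its slot of the ordered monomial
`(Y_1*)^{k_1} ⋯ (Y_n*)^{k_n}`, picking up `q^{k_1 + ⋯ + k_{i-1}}`, while `Y_{n+1}` moves through
the whole monomial onto `ξ`, picking up `q^{|k| + k_n}`. The square roots come from the
normalisation: raising `k_i` by one multiplies the product of `q`-Pochhammer symbols by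
`1 - q^{2k_i+2}` (by `1 - q^{4k_n+4}` for `i = n`).
-/

open Finset Function

theorem Fin.sum_Iio_succ {N : Type*} [AddCommMonoid N] {n : ℕ} (k : Fin (n + 1) → N)
    (i : Fin n) : ∑ j ∈ Iio i.succ, k j = k 0 + ∑ j ∈ Iio i, k j.succ := by
  rw [Iio_eq_Ico, bot_eq_zero, ← Ioo_insert_left i.succ_pos, ← Fin.map_succEmb_Iio,
    sum_insert (by simp), sum_map]
  rfl

section SkewCommutation

variable {R M : Type*} [CommSemiring R] [Semiring M] [Algebra R M]

theorem mul_pow_eq_smul_pow_mul {A B : M} {c : R} (h : A * B = c • (B * A)) (m : ℕ) :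
    A * B ^ m = c ^ m • (B ^ m * A) := by
  induction m with
  | zero => simp
  | succ m ih =>
    calc A * B ^ (m + 1) = c ^ m • (B ^ m * (A * B)) := by
          rw [pow_succ, ← mul_assoc, ih, smul_mul_assoc, mul_assoc]
      _ = c ^ (m + 1) • (B ^ (m + 1) * A) := by
          rw [h, mul_smul_comm, smul_smul, ← pow_succ, ← mul_assoc, ← pow_succ]

theorem mul_prod_ofFn_eq_smul_prod_ofFn_mul {n : ℕ} (A : M) (g : Fin n → M) (c : Fin n → R)
    (h : ∀ j, A * g j = c j • (g j * A)) :
    A * (List.ofFn g).prod = (∏ j, c j) • ((List.ofFn g).prod * A) := by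
  induction n with
  | zero => simp
  | succ n ih =>
    rw [List.ofFn_succ, List.prod_cons, ← mul_assoc, h 0, smul_mul_assoc, mul_assoc,
      ih (fun j => g j.succ) (fun j => c j.succ) (fun j => h j.succ),
      Fin.prod_univ_succ, mul_smul_comm, smul_smul, mul_assoc]

theorem mul_prod_ofFn_pow_eq_smul {n : ℕ} (A : Fin n → M) (c : R)
    (hA : ∀ j l, j < l → A l * A j = c • (A j * A l)) (k : Fin n → ℕ) (i : Fin n) :
    A i * (List.ofFn fun j => A j ^ k j).prod
      = c ^ (∑ j ∈ Iio i, k j) • (List.ofFn fun j => A j ^ update k i (k i + 1) j).prod := by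
  induction n with
  | zero => exact i.elim0
  | succ n ih =>
    simp only [List.ofFn_succ, List.prod_cons]
    cases i using Fin.cases with
    | zero =>
      have hnone : ∑ j ∈ Iio (0 : Fin (n + 1)), k j = 0 := sum_eq_zero (by simp)
      simp only [update_self, update_of_ne (Fin.succ_ne_zero _), hnone, pow_zero, one_smul,
        ← mul_assoc, ← pow_succ']
    | succ i =>
      have hshift : (fun j : Fin n => update k i.succ (k i.succ + 1) j.succ)
          = update (fun j => k j.succ) i (k i.succ + 1) :=
        update_comp_eq_of_injective k (Fin.succ_injective n) i _
      rw [update_of_ne (Fin.succ_ne_zero i).symm, ← mul_assoc,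
        mul_pow_eq_smul_pow_mul (hA 0 i.succ i.succ_pos), smul_mul_assoc, mul_assoc,
        ih (fun j => A j.succ) (fun j l hjl => hA j.succ l.succ (Fin.succ_lt_succ_iff.mpr hjl)),
        mul_smul_comm, smul_smul, Fin.sum_Iio_succ, pow_add, ← hshift]

end SkewCommutation

theorem star_mul_star_eq_smul_of_mul_eq_inv_smul {M : Type*} [Ring M] [StarRing M]
    [Algebra ℂ M] [StarModule ℂ M] {r : ℝ} (hr : r ≠ 0) {A B : M}
    (h : A * B = (r : ℂ)⁻¹ • (B * A)) :
    star A * star B = (r : ℂ) • (star B * star A) := by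
  have hstar := congrArg star h
  rw [star_mul, star_smul, star_mul, star_inv₀, Complex.star_def, Complex.conj_ofReal] at hstar
  exact (inv_smul_eq_iff₀ (by exact_mod_cast hr)).mp hstar.symm

theorem qPoch_self_succ (p : ℝ) (l : ℕ) :
    qPoch p p (l + 1) = qPoch p p l * (1 - p ^ (l + 1)) := by
  rw [qPoch, qPoch, prod_range_succ, pow_succ']

theorem prod_apply_update_succ {ι N : Type*} [Fintype ι] [DecidableEq ι] [CommMonoid N]
    (F : ι → ℕ → N) (c : ι → ℕ → N) (hF : ∀ j m, F j (m + 1) = F j m * c j m)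
    (k : ι → ℕ) (i : ι) :
    ∏ j, F j (update k i (k i + 1) j) = c i (k i) * ∏ j, F j (k j) := by
  simp only [apply_update (fun j => F j) k, prod_update_of_mem (mem_univ i), hF]
  rw [← mul_prod_erase univ (fun j => F j (k j)) (mem_univ i), sdiff_singleton_eq_erase]
  ac_rfl

theorem inv_sqrt_eq_sqrt_mul_inv_sqrt_mul {c : ℝ} (hc : 0 < c) (N : ℝ) :
    (√N)⁻¹ = √c * (√(c * N))⁻¹ := by
  rw [Real.sqrt_mul hc.le, mul_inv, ← mul_assoc, mul_inv_cancel₀ (Real.sqrt_pos.mpr hc).ne',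
    one_mul]

def ketNormSq (q : ℝ) {n : ℕ} (k : Fin n → ℕ) : ℝ :=
  ∏ i : Fin n,
    if (i : ℕ) + 1 = n then qPoch (q ^ 4) (q ^ 4) (k i) else qPoch (q ^ 2) (q ^ 2) (k i)

theorem ketNormSq_update_succ (q : ℝ) {n : ℕ} (k : Fin n → ℕ) (i : Fin n) :
    ketNormSq q (update k i (k i + 1))
      = (1 - q ^ (if (i : ℕ) + 1 = n then 4 * k i + 4 else 2 * k i + 2)) * ketNormSq q k :=
  prod_apply_update_succ
    (fun (j : Fin n) m =>
      if (j : ℕ) + 1 = n then qPoch (q ^ 4) (q ^ 4) m else qPoch (q ^ 2) (q ^ 2) m)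
    (fun j m => 1 - q ^ (if (j : ℕ) + 1 = n then 4 * m + 4 else 2 * m + 2))
    (fun j m => by split_ifs <;> rw [qPoch_self_succ, ← pow_mul] <;> ring_nf) k i

section SigmaQFamily

variable {q : ℝ} {n : ℕ} {H : Type*} [NormedAddCommGroup H] [InnerProductSpace ℂ H]
  [CompleteSpace H] {Y : Fin (n + 1) → H →L[ℂ] H}

theorem ket_eq_smul (ξ : H) (k : Fin n → ℕ) :
    ket q Y ξ k = (((√(ketNormSq q k))⁻¹ : ℝ) : ℂ) •
      (List.ofFn fun i : Fin n => adjoint (Y i.castSucc) ^ k i).prod ξ :=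
  rfl

theorem IsSigmaQFamily.adjoint_mul_adjoint_of_lt (hY : IsSigmaQFamily q Y) (hq : q ≠ 0)
    {j l : Fin n} (hjl : j < l) :
    adjoint (Y l.castSucc) * adjoint (Y j.castSucc)
      = (q : ℂ) • (adjoint (Y j.castSucc) * adjoint (Y l.castSucc)) := by
  have hR1 := (hY.1 l.castSucc j.castSucc (Fin.castSucc_lt_castSucc_iff.mpr hjl)
    (fun h => by have := l.isLt; simp only [Fin.val_castSucc] at h; omega)).1
  simpa only [star_eq_adjoint] using star_mul_star_eq_smul_of_mul_eq_inv_smul hq hR1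

theorem IsSigmaQFamily.last_mul_adjoint (hY : IsSigmaQFamily q Y) (hq : q ≠ 0) (j : Fin n) :
    Y (Fin.last n) * adjoint (Y j.castSucc)
      = ((q ^ (if (j : ℕ) + 1 = n then 2 else 1) : ℝ) : ℂ) •
          (adjoint (Y j.castSucc) * Y (Fin.last n)) := by
  have hR : adjoint (Y (Fin.last n)) * Y j.castSucc
      = ((q ^ (if (j : ℕ) + 1 = n then 2 else 1) : ℝ) : ℂ)⁻¹ •
          (Y j.castSucc * adjoint (Y (Fin.last n))) := by
    split_ifs with hj
    · rw [(hY.2.1 j.castSucc hj).2]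
      push_cast
      rw [inv_pow]
    · rw [(hY.1 _ _ (Fin.castSucc_lt_last j) (fun h => hj h.2)).2, pow_one]
  simpa only [star_eq_adjoint, adjoint_adjoint] using
    star_mul_star_eq_smul_of_mul_eq_inv_smul (pow_ne_zero _ hq) hR

theorem IsSigmaQFamily.adjoint_apply_ket (hY : IsSigmaQFamily q Y) (hq0 : 0 < q) (hq1 : q < 1)
    (ξ : H) (i : Fin n) (k : Fin n → ℕ) :
    adjoint (Y i.castSucc) (ket q Y ξ k)
      = ((q ^ (∑ j ∈ Iio i, k j) *
            √(1 - q ^ (if (i : ℕ) + 1 = n then 4 * k i + 4 else 2 * k i + 2)) : ℝ) : ℂ) •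
          ket q Y ξ (update k i (k i + 1)) := by
  have hfac : 0 < 1 - q ^ (if (i : ℕ) + 1 = n then 4 * k i + 4 else 2 * k i + 2) :=
    sub_pos.mpr (pow_lt_one₀ hq0.le hq1 (by split_ifs <;> omega))
  rw [ket_eq_smul, ket_eq_smul, ketNormSq_update_succ, map_smul, ← mul_apply_eq_comp,
    mul_prod_ofFn_pow_eq_smul (fun j => adjoint (Y j.castSucc)) _
      (fun _ _ => hY.adjoint_mul_adjoint_of_lt hq0.ne'),
    smul_apply, smul_smul, smul_smul, inv_sqrt_eq_sqrt_mul_inv_sqrt_mul hfac]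
  push_cast
  congr 1
  ring

theorem IsSigmaQFamily.last_apply_ket (hY : IsSigmaQFamily q Y) (hq : q ≠ 0) (ξ : H)
    (k : Fin n → ℕ) :
    Y (Fin.last n) (ket q Y ξ k)
      = ((q ^ (∑ j : Fin n, if (j : ℕ) + 1 = n then 2 * k j else k j) : ℝ) : ℂ) •
          ket q Y (Y (Fin.last n) ξ) k := by
  rw [ket_eq_smul, ket_eq_smul, map_smul, ← mul_apply_eq_comp,
    mul_prod_ofFn_eq_smul_prod_ofFn_mul _ _ _
      (fun j => mul_pow_eq_smul_pow_mul (hY.last_mul_adjoint hq j) (k j)),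
    smul_apply, mul_apply_eq_comp, smul_smul, smul_smul]
  congr 1
  push_cast
  simp only [← pow_mul, ite_mul, one_mul, prod_pow_eq_pow_sum]
  exact mul_comm _ _

end SigmaQFamily

theorem ket_relations_general (q : ℝ) (hq0 : 0 < q) (hq1 : q < 1) (n : ℕ)
    {H : Type*} [NormedAddCommGroup H] [InnerProductSpace ℂ H] [CompleteSpace H]
    (Y : Fin (n + 1) → H →L[ℂ] H) (hY : IsSigmaQFamily q Y)
    (ξ : H) :
    (∀ i : Fin n, (i : ℕ) + 1 < n → ∀ k : Fin n → ℕ,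
        adjoint (Y i.castSucc) (ket q Y ξ k)
          = ((q ^ (∑ j ∈ Finset.Iio i, k j) * Real.sqrt (1 - q ^ (2 * k i + 2)) : ℝ) : ℂ)
              • ket q Y ξ (Function.update k i (k i + 1))) ∧
    (∀ i : Fin n, (i : ℕ) + 1 = n → ∀ k : Fin n → ℕ,
        adjoint (Y i.castSucc) (ket q Y ξ k)
          = ((q ^ (∑ j ∈ Finset.Iio i, k j) * Real.sqrt (1 - q ^ (4 * k i + 4)) : ℝ) : ℂ)
              • ket q Y ξ (Function.update k i (k i + 1))) ∧
    (∀ k : Fin n → ℕ,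
        Y (Fin.last n) (ket q Y ξ k)
          = ((q ^ (∑ j : Fin n, if (j : ℕ) + 1 = n then 2 * k j else k j) : ℝ) : ℂ)
              • ket q Y (Y (Fin.last n) ξ) k) := by
  refine ⟨fun i hi k => ?_, fun i hi k => ?_, hY.last_apply_ket hq0.ne' ξ⟩
  · rw [hY.adjoint_apply_ket hq0 hq1 ξ i k, if_neg hi.ne]
  · rw [hY.adjoint_apply_ket hq0 hq1 ξ i k, if_pos hi]

/-- Equations (16) of the paper: action of `Y_i*` (`1 ≤ i < n`), of `Y_n*` and of
`Y_{n+1}` on the vectors `|k⟩_ξ`. -/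
theorem ket_relations (q : ℝ) (hq0 : 0 < q) (hq1 : q < 1) (n : ℕ) (hn : 1 ≤ n)
    {H : Type*} [NormedAddCommGroup H] [InnerProductSpace ℂ H] [CompleteSpace H]
    (Y : Fin (n + 1) → H →L[ℂ] H) (hY : IsSigmaQFamily q Y)
    (ξ : H) (hann : ∀ i : Fin n, Y i.castSucc ξ = 0) :
    (∀ i : Fin n, (i : ℕ) + 1 < n → ∀ k : Fin n → ℕ,
        adjoint (Y i.castSucc) (ket q Y ξ k)
          = ((q ^ (∑ j ∈ Finset.Iio i, k j) * Real.sqrt (1 - q ^ (2 * k i + 2)) : ℝ) : ℂ)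
              • ket q Y ξ (Function.update k i (k i + 1))) ∧
    (∀ i : Fin n, (i : ℕ) + 1 = n → ∀ k : Fin n → ℕ,
        adjoint (Y i.castSucc) (ket q Y ξ k)
          = ((q ^ (∑ j ∈ Finset.Iio i, k j) * Real.sqrt (1 - q ^ (4 * k i + 4)) : ℝ) : ℂ)
              • ket q Y ξ (Function.update k i (k i + 1))) ∧
    (∀ k : Fin n → ℕ,
        Y (Fin.last n) (ket q Y ξ k)
          = ((q ^ (∑ j : Fin n, if (j : ℕ) + 1 = n then 2 * k j else k j) : ℝ) : ℂ)
              • ket q Y (Y (Fin.last n) ξ) k) :=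
  ket_relations_general q hq0 hq1 n Y hY ξ
end
end

section
/- For every real number q with 0<q<1, every integer n≥1 and every λ∈ℂ with |λ|=1, the operators of the representation π_λ on ℓ²(ℕⁿ) satisfy: π_λ(Y_n)π_λ(Y_n)* − π_λ(Y_n)*π_λ(Y_n) = (1−q⁴)·π_λ(Y_{n+1})*π_λ(Y_{n+1}), and π_λ(Y_i)π_λ(Y_i)* − π_λ(Y_i)*π_λ(Y_i) = (1−q²)·Σ_{k=i+1}^{n+1} π_λ(Y_k)*π_λ(Y_k) for every 1≤i≤n+1 with i≠n. -/
open ContinuousLinearMap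

noncomputable section

/-!
Each `π_λ(Y_j)` is a weighted shift of the basis `e_k`: for `j ≤ n` it lowers `k_j` by one,
and `π_λ(Y_{n+1})` is diagonal. Hence `π_λ(Y_j)^* π_λ(Y_j)` and `π_λ(Y_j) π_λ(Y_j)^*` are
diagonal, their eigenvalues are the squared moduli of the weights, and every relation becomes an
identity between real functions of `k`. Put `w_j = k_j` for `j < n`, `w_n = 2 k_n`,
`P_m = q^{2(w_1 + ⋯ + w_m)}` for `m ≤ n` and `P_{n+1} = 0`. Then `π_λ(Y_j)^* π_λ(Y_j)` has
eigenvalue `P_{j-1} - P_j`, so `∑_{j > i} π_λ(Y_j)^* π_λ(Y_j)` telescopes to `P_i`, while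
the commutator of `π_λ(Y_i)` has eigenvalue `(1 - q²) P_i` for `i < n` and `(1 - q⁴) P_n`
for `i = n`.
-/

open scoped lp ComplexConjugate

namespace lp

variable {ι : Type*} [DecidableEq ι] {A : ℓ²(ι, ℂ) →L[ℂ] ℓ²(ι, ℂ)} {c : ι → ℂ}
  {f g : ι → ι}

theorem adjoint_apply_single_of_weightedShift
    (hA : ∀ k, A (lp.single 2 k 1) = c k • lp.single 2 (f k) 1)
    (hfg : ∀ m, f (g m) = m) (hgf : ∀ k, c k ≠ 0 → g (f k) = k) (m : ι) :
    adjoint A (lp.single 2 m 1) = conj (c (g m)) • lp.single 2 (g m) 1 := by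
  ext k
  have hk : (adjoint A (lp.single 2 m 1)) k = conj (c k) * (if f k = m then 1 else 0) :=
    calc (adjoint A (lp.single 2 m 1)) k
        = inner ℂ (lp.single 2 k (1 : ℂ)) (adjoint A (lp.single 2 m 1)) := by
          simp [inner_single_left]
      _ = inner ℂ (A (lp.single 2 k 1)) (lp.single 2 m (1 : ℂ)) := adjoint_inner_right ..
      _ = conj (c k) * (if f k = m then 1 else 0) := by
          simp [hA, inner_single_left, lp.single_apply, Pi.single_apply]
  rw [hk]
  by_cases hkm : k = g m
  · subst hkm; simp [hfg]
  · by_cases hck : c k = 0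
    · simp [hck, hkm, lp.single_apply]
    · have : f k ≠ m := fun h => hkm (h ▸ (hgf k hck).symm)
      simp [this, hkm, lp.single_apply]

theorem adjoint_mul_self_apply_single_of_weightedShift
    (hA : ∀ k, A (lp.single 2 k 1) = c k • lp.single 2 (f k) 1)
    (hfg : ∀ m, f (g m) = m) (hgf : ∀ k, c k ≠ 0 → g (f k) = k) (k : ι) :
    (adjoint A * A) (lp.single 2 k 1) = ((‖c k‖ ^ 2 : ℝ) : ℂ) • lp.single 2 k 1 := by
  by_cases hck : c k = 0
  · simp [hA, hck]
  · rw [mul_apply_eq_comp, hA, map_smul,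
      adjoint_apply_single_of_weightedShift hA hfg hgf, hgf k hck, smul_smul, mul_comm,
      RCLike.conj_mul]
    push_cast; rfl

theorem mul_adjoint_self_apply_single_of_weightedShift
    (hA : ∀ k, A (lp.single 2 k 1) = c k • lp.single 2 (f k) 1)
    (hfg : ∀ m, f (g m) = m) (hgf : ∀ k, c k ≠ 0 → g (f k) = k) (m : ι) :
    (A * adjoint A) (lp.single 2 m 1) = ((‖c (g m)‖ ^ 2 : ℝ) : ℂ) • lp.single 2 m 1 := by
  rw [mul_apply_eq_comp, adjoint_apply_single_of_weightedShift hA hfg hgf, map_smul,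
    hA, hfg, smul_smul, RCLike.conj_mul]
  push_cast; rfl

end lp

section Lowering

open Function

variable {α : Type*} [DecidableEq α] {i : α}

theorem update_update_add_one_sub_one (k : α → ℕ) :
    update (update k i (k i + 1)) i (update k i (k i + 1) i - 1) = k := by
  simp

theorem update_update_sub_one_add_one {k : α → ℕ} (hk : k i ≠ 0) :
    update (update k i (k i - 1)) i (update k i (k i - 1) i + 1) = k := by
  simp [Nat.sub_add_cancel (Nat.pos_of_ne_zero hk)]

variable [DecidableEq (α → ℕ)] {A : ℓ²(α → ℕ, ℂ) →L[ℂ] ℓ²(α → ℕ, ℂ)}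
  {c : (α → ℕ) → ℝ}

theorem adjoint_mul_self_apply_single_of_lowering
    (hA : ∀ k, A (lp.single 2 k 1) = (c k : ℂ) • lp.single 2 (update k i (k i - 1)) 1)
    (hc : ∀ k, k i = 0 → c k = 0) (k : α → ℕ) :
    (adjoint A * A) (lp.single 2 k 1) = ((c k ^ 2 : ℝ) : ℂ) • lp.single 2 k 1 := by
  rw [lp.adjoint_mul_self_apply_single_of_weightedShift hA
    (fun _ => update_update_add_one_sub_one _)
    (fun k hk => update_update_sub_one_add_one fun h => hk (by simp [hc k h])),
    Complex.norm_real, Real.norm_eq_abs, sq_abs]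

theorem mul_adjoint_self_apply_single_of_lowering
    (hA : ∀ k, A (lp.single 2 k 1) = (c k : ℂ) • lp.single 2 (update k i (k i - 1)) 1)
    (hc : ∀ k, k i = 0 → c k = 0) (k : α → ℕ) :
    (A * adjoint A) (lp.single 2 k 1)
      = ((c (update k i (k i + 1)) ^ 2 : ℝ) : ℂ) • lp.single 2 k 1 := by
  rw [lp.mul_adjoint_self_apply_single_of_weightedShift hA
    (fun _ => update_update_add_one_sub_one _)
    (fun k hk => update_update_sub_one_add_one fun h => hk (by simp [hc k h])),
    Complex.norm_real, Real.norm_eq_abs, sq_abs]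

end Lowering

section PiLowering

open Finset Function

variable {q : ℝ} {n : ℕ} {A : lpH n →L[ℂ] lpH n} {e : ℕ} {i : Fin n}

/-- The shape of `π_λ(Y_{i+1})`, with `e = 2` for `i + 1 < n` and `e = 4` for `i + 1 = n`. -/
def IsPiLowering (q : ℝ) {n : ℕ} (e : ℕ) (i : Fin n) (A : lpH n →L[ℂ] lpH n) : Prop :=
  ∀ k, A (basisE k) = ((q ^ (∑ j ∈ Iio i, k j) * √(1 - q ^ (e * k i)) : ℝ) : ℂ)
    • basisE (update k i (k i - 1))

theorem ext_basisE {B : lpH n →L[ℂ] lpH n} (h : ∀ k, A (basisE k) = B (basisE k)) : A = B :=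
  lp.ext_continuousLinearMap ENNReal.ofNat_ne_top fun k => ContinuousLinearMap.ext_ring (h k)

theorem sum_Iio_update (k : Fin n → ℕ) (t : ℕ) :
    ∑ j ∈ Iio i, update k i t j = ∑ j ∈ Iio i, k j :=
  sum_congr rfl fun _ hj => update_of_ne (mem_Iio.mp hj).ne _ _

theorem sq_piLoweringWeight (hq0 : 0 ≤ q) (hq1 : q ≤ 1) (k : Fin n → ℕ) (m : ℕ) :
    (q ^ (∑ j ∈ Iio i, k j) * √(1 - q ^ m)) ^ 2
      = q ^ (2 * ∑ j ∈ Iio i, k j) * (1 - q ^ m) := by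
  rw [mul_pow, ← pow_mul, mul_comm _ 2, Real.sq_sqrt (sub_nonneg.mpr (pow_le_one₀ hq0 hq1))]

theorem IsPiLowering.adjoint_mul_self_apply (hA : IsPiLowering q e i A) (hq0 : 0 ≤ q)
    (hq1 : q ≤ 1) (k : Fin n → ℕ) :
    (adjoint A * A) (basisE k)
      = ((q ^ (2 * ∑ j ∈ Iio i, k j) * (1 - q ^ (e * k i)) : ℝ) : ℂ) • basisE k := by
  rw [basisE, adjoint_mul_self_apply_single_of_lowering hA (fun k hk => by simp [hk]),
    sq_piLoweringWeight hq0 hq1]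

theorem IsPiLowering.commutator_apply (hA : IsPiLowering q e i A) (hq0 : 0 ≤ q)
    (hq1 : q ≤ 1) (k : Fin n → ℕ) :
    (A * adjoint A - adjoint A * A) (basisE k)
      = (((1 - q ^ e) * q ^ (2 * ∑ j ∈ Iio i, k j + e * k i) : ℝ) : ℂ) • basisE k := by
  rw [sub_apply, hA.adjoint_mul_self_apply hq0 hq1,
    basisE, mul_adjoint_self_apply_single_of_lowering hA (fun k hk => by simp [hk]),
    sq_piLoweringWeight hq0 hq1, sum_Iio_update, update_self, ← sub_smul, ← Complex.ofReal_sub]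
  congr 2
  ring

end PiLowering

theorem Fin.sum_Ioi_sub_succ {M : Type*} [AddCommGroup M] {N : ℕ} (P : ℕ → M) (i : Fin N) :
    ∑ j ∈ Finset.Ioi i, (P j - P (j + 1)) = P (i + 1) - P N :=
  calc ∑ j ∈ Finset.Ioi i, (P j - P (j + 1))
      = ∑ m ∈ (Finset.Ioi i).map Fin.valEmbedding, (P m - P (m + 1)) :=
        (Finset.sum_map (Finset.Ioi i) Fin.valEmbedding fun m => P m - P (m + 1)).symm
    _ = P (i + 1) - P N := by
      rw [Fin.map_valEmbedding_Ioi, ← Finset.Ico_add_one_left_eq_Ioo, ← neg_sub,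
        ← Finset.sum_Ico_sub _ i.isLt, ← Finset.sum_neg_distrib]
      simp

section GramPotential

open Finset

variable (q : ℝ) {n : ℕ} (k : Fin n → ℕ)

/-- `gramPotential q k m` is the `P_m` of the header, evaluated at `k`. -/
def gramPotential (m : ℕ) : ℝ :=
  if m ≤ n then
    q ^ (2 * ∑ j ∈ univ.filter (fun j : Fin n => (j : ℕ) < m),
      if (j : ℕ) + 1 = n then 2 * k j else k j)
  else 0

theorem gramPotential_val (i : Fin n) :
    gramPotential q k i = q ^ (2 * ∑ j ∈ Iio i, k j) := by
  have hfilter : univ.filter (fun j : Fin n => (j : ℕ) < i) = Iio i := by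
    ext j; simp
  rw [gramPotential, if_pos i.isLt.le, hfilter]
  congr 2
  exact sum_congr rfl fun j hj => if_neg (by have := Fin.lt_def.mp (mem_Iio.mp hj); omega)

theorem gramPotential_val_succ (i : Fin n) :
    gramPotential q k (i + 1)
      = q ^ (2 * (∑ j ∈ Iio i, k j) + 2 * if (i : ℕ) + 1 = n then 2 * k i else k i) := by
  have hfilter : univ.filter (fun j : Fin n => (j : ℕ) < i + 1) = Iic i := by
    ext j
    simp only [mem_filter, mem_univ, true_and, mem_Iic, Fin.le_iff_val_le_val]
    omega
  rw [gramPotential, if_pos (show (i : ℕ) + 1 ≤ n from i.isLt), hfilter, Iic_eq_cons_Iio,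
    sum_cons, mul_add, add_comm]
  congr 3
  exact sum_congr rfl fun j hj => if_neg (by have := Fin.lt_def.mp (mem_Iio.mp hj); omega)

theorem gramPotential_self :
    gramPotential q k n = q ^ (2 * ∑ j : Fin n, if (j : ℕ) + 1 = n then 2 * k j else k j) := by
  rw [gramPotential, if_pos le_rfl, filter_true_of_mem fun j _ => j.isLt]

theorem gramPotential_succ_self : gramPotential q k (n + 1) = 0 :=
  if_neg (Nat.not_succ_le_self n)

end GramPotential

namespace IsPiRep

open Finset

variable {q : ℝ} {n : ℕ} {lam : ℂ} {Y : Fin (n + 1) → lpH n →L[ℂ] lpH n}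

theorem isPiLowering_of_lt (hY : IsPiRep q lam Y) {i : Fin n} (hi : (i : ℕ) + 1 < n) :
    IsPiLowering q 2 i (Y i.castSucc) :=
  hY.1 i hi

theorem isPiLowering_of_eq (hY : IsPiRep q lam Y) {i : Fin n} (hi : (i : ℕ) + 1 = n) :
    IsPiLowering q 4 i (Y i.castSucc) :=
  hY.2.1 i hi

theorem norm_sq_lam_mul_pow (hlam : ‖lam‖ = 1) (T : ℕ) :
    ‖lam * (q : ℂ) ^ T‖ ^ 2 = q ^ (2 * T) := by
  rw [norm_mul, hlam, one_mul, norm_pow, Complex.norm_real, Real.norm_eq_abs, ← pow_mul,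
    mul_comm, pow_mul, sq_abs, ← pow_mul]

theorem adjoint_mul_self_last_apply (hY : IsPiRep q lam Y) (hlam : ‖lam‖ = 1)
    (k : Fin n → ℕ) :
    (adjoint (Y (Fin.last n)) * Y (Fin.last n)) (basisE k)
      = ((gramPotential q k n : ℝ) : ℂ) • basisE k := by
  rw [basisE, lp.adjoint_mul_self_apply_single_of_weightedShift (f := id) (g := id) hY.2.2
    (fun _ => rfl) (fun _ _ => rfl), norm_sq_lam_mul_pow hlam, gramPotential_self]

theorem mul_adjoint_self_last_apply (hY : IsPiRep q lam Y) (hlam : ‖lam‖ = 1)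
    (k : Fin n → ℕ) :
    (Y (Fin.last n) * adjoint (Y (Fin.last n))) (basisE k)
      = ((gramPotential q k n : ℝ) : ℂ) • basisE k := by
  rw [basisE, lp.mul_adjoint_self_apply_single_of_weightedShift (f := id) (g := id) hY.2.2
    (fun _ => rfl) (fun _ _ => rfl), id, norm_sq_lam_mul_pow hlam, gramPotential_self]

theorem adjoint_mul_self_apply (hY : IsPiRep q lam Y) (hq0 : 0 ≤ q) (hq1 : q ≤ 1)
    (hlam : ‖lam‖ = 1) (j : Fin (n + 1)) (k : Fin n → ℕ) :
    (adjoint (Y j) * Y j) (basisE k)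
      = ((gramPotential q k j - gramPotential q k (j + 1) : ℝ) : ℂ) • basisE k := by
  rcases Fin.eq_castSucc_or_eq_last j with ⟨i, rfl⟩ | rfl
  · rw [Fin.val_castSucc, gramPotential_val, gramPotential_val_succ]
    rcases (Nat.succ_le_of_lt i.isLt).lt_or_eq with hi | hi
    · rw [(hY.isPiLowering_of_lt hi).adjoint_mul_self_apply hq0 hq1, if_neg hi.ne]
      congr 2; ring
    · rw [(hY.isPiLowering_of_eq hi).adjoint_mul_self_apply hq0 hq1, if_pos hi]
      congr 2; ring
  · rw [Fin.val_last, hY.adjoint_mul_self_last_apply hlam, gramPotential_succ_self, sub_zero]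

end IsPiRep

theorem piRep_commutators_general (q : ℝ) (hq0 : 0 < q) (hq1 : q < 1) (n : ℕ)
    (lam : ℂ) (hlam : ‖lam‖ = 1) (Y : Fin (n + 1) → lpH n →L[ℂ] lpH n)
    (hY : IsPiRep q lam Y) :
    (∀ i : Fin (n + 1), (i : ℕ) + 1 = n →
        Y i * adjoint (Y i) - adjoint (Y i) * Y i
          = ((1 - q ^ 4 : ℝ) : ℂ) • (adjoint (Y (Fin.last n)) * Y (Fin.last n))) ∧
    (∀ i : Fin (n + 1), (i : ℕ) + 1 ≠ n →
        Y i * adjoint (Y i) - adjoint (Y i) * Y i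
          = ((1 - q ^ 2 : ℝ) : ℂ) • ∑ k ∈ Finset.Ioi i, adjoint (Y k) * Y k) := by
  refine ⟨fun i hi => ?_, fun i hi => ?_⟩
  · obtain ⟨i, rfl⟩ : ∃ i' : Fin n, i'.castSucc = i := ⟨⟨i, by omega⟩, rfl⟩
    rw [Fin.val_castSucc] at hi
    refine ext_basisE fun k => ?_
    have hP := gramPotential_val_succ q k i
    rw [if_pos hi, hi] at hP
    rw [(hY.isPiLowering_of_eq hi).commutator_apply hq0.le hq1.le, smul_apply,
      hY.adjoint_mul_self_last_apply hlam, hP, smul_smul, ← Complex.ofReal_mul]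
    congr 3; ring
  · rcases Fin.eq_castSucc_or_eq_last i with ⟨i, rfl⟩ | rfl
    · have hi : (i : ℕ) + 1 < n := lt_of_le_of_ne i.isLt hi
      refine ext_basisE fun k => ?_
      have gram := hY.adjoint_mul_self_apply hq0.le hq1.le hlam
      rw [(hY.isPiLowering_of_lt hi).commutator_apply hq0.le hq1.le, smul_apply,
        _root_.sum_apply, Finset.sum_congr rfl fun j _ => gram j k, ← Finset.sum_smul,
        ← Complex.ofReal_sum, Fin.sum_Ioi_sub_succ, gramPotential_succ_self, sub_zero,
        Fin.val_castSucc, gramPotential_val_succ, if_neg hi.ne, smul_smul, ← Complex.ofReal_mul]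
    · have hcomm : Y (Fin.last n) * adjoint (Y (Fin.last n))
          = adjoint (Y (Fin.last n)) * Y (Fin.last n) :=
        ext_basisE fun k => (hY.mul_adjoint_self_last_apply hlam k).trans
          (hY.adjoint_mul_self_last_apply hlam k).symm
      simp [hcomm, Finset.Ioi_eq_empty.mpr fun j _ => Fin.le_last j]

/-- The operators of `π_λ` satisfy the commutation relations (R3) and (R4). -/
theorem piRep_commutators (q : ℝ) (hq0 : 0 < q) (hq1 : q < 1) (n : ℕ) (hn : 1 ≤ n)
    (lam : ℂ) (hlam : ‖lam‖ = 1) (Y : Fin (n + 1) → lpH n →L[ℂ] lpH n)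
    (hY : IsPiRep q lam Y) :
    (∀ i : Fin (n + 1), (i : ℕ) + 1 = n →
        Y i * adjoint (Y i) - adjoint (Y i) * Y i
          = ((1 - q ^ 4 : ℝ) : ℂ) • (adjoint (Y (Fin.last n)) * Y (Fin.last n))) ∧
    (∀ i : Fin (n + 1), (i : ℕ) + 1 ≠ n →
        Y i * adjoint (Y i) - adjoint (Y i) * Y i
          = ((1 - q ^ 2 : ℝ) : ℂ) • ∑ k ∈ Finset.Ioi i, adjoint (Y k) * Y k) :=
  piRep_commutators_general q hq0 hq1 n lam hlam Y hY
end
end
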